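/- arXiv:2406.20012 — 6 statements merged into one kernel-verified Lean document; each statement's English description precedes it below -/
import Mathlib

section
/- ℂ(x²)·φ(D(q)) = (ℂ(x)#ℤ)^{S₂} = φ(D(q))·ℂ(x²), where ℂ(x²)·φ(D(q)) (respectively φ(D(q))·ℂ(x²)) denotes the set of finite sums Σ gᵢ(x²)·φ(dᵢ) (respectively Σ φ(dᵢ)·gᵢ(x²)) with gᵢ(x²) ∈ ℂ(x²) and dᵢ ∈ D(q). In other words, D(q) is a Galois ring with respect to ℂ[u]. -/
noncomputable section

open Polynomial

namespace KleinD

/-- The three generators of the free algebra. -/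
def U : FreeAlgebra ℂ (Fin 3) := FreeAlgebra.ι ℂ 0
def V : FreeAlgebra ℂ (Fin 3) := FreeAlgebra.ι ℂ 1
def W : FreeAlgebra ℂ (Fin 3) := FreeAlgebra.ι ℂ 2

/-- ρ = 2 q(-1/2). -/
def rho (q : ℂ[X]) : ℂ := 2 * q.eval (-(1/2 : ℂ))

/-- The condition that p₀, p₁ satisfy `(1+2t)² (p₀(t²) + p₁(t²) t) = -4 q(t) q(-t-1) + ρ²`. -/
def pCond (q p₀ p₁ : ℂ[X]) : Prop :=
  (1 + 2 * X) ^ 2 * (p₀.comp (X ^ 2) + p₁.comp (X ^ 2) * X)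
    = -4 * q * q.comp (-X - 1) + C (rho q) ^ 2

/-- The defining relations of `D(q)`. -/
inductive DqRel (q p₀ p₁ : ℂ[X]) : FreeAlgebra ℂ (Fin 3) → FreeAlgebra ℂ (Fin 3) → Prop
  | rel1 : DqRel q p₀ p₁ (U * V - V * U) (2 * W + V)
  | rel2 : DqRel q p₀ p₁ (U * W - W * U)
      (2 * V * U + W + algebraMap ℂ (FreeAlgebra ℂ (Fin 3)) (rho q))
  | rel3 : DqRel q p₀ p₁ (V * W - W * V) (-(V * V) - Polynomial.aeval U p₁)
  | rel4 : DqRel q p₀ p₁ (W * W)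
      (V * V * U + V * W + algebraMap ℂ (FreeAlgebra ℂ (Fin 3)) (rho q) * V
        + Polynomial.aeval U p₀)

/-- The noncommutative type D Kleinian singularity `D(q)`. -/
abbrev Dq (q p₀ p₁ : ℂ[X]) := RingQuot (DqRel q p₀ p₁)

def uD (q p₀ p₁ : ℂ[X]) : Dq q p₀ p₁ := RingQuot.mkAlgHom ℂ (DqRel q p₀ p₁) U
def vD (q p₀ p₁ : ℂ[X]) : Dq q p₀ p₁ := RingQuot.mkAlgHom ℂ (DqRel q p₀ p₁) V
def wD (q p₀ p₁ : ℂ[X]) : Dq q p₀ p₁ := RingQuot.mkAlgHom ℂ (DqRel q p₀ p₁) W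

/-- `ℂ(x)`, the field of rational functions. -/
abbrev L := RatFunc ℂ

/-- `x ∈ ℂ(x)`. -/
def xL : L := RatFunc.X

/-- The ℂ-algebra automorphism `τ` of ℂ(x), determined by `x ↦ -x`. -/
def tauL : L ≃ₐ[ℂ] L :=
  IsFractionRing.algEquivOfAlgEquiv (Polynomial.algEquivAevalNegX (R := ℂ))

/-- The ℂ-algebra automorphism `δ` of ℂ(x), determined by `x ↦ x - 1`. -/
def deltaL : L ≃ₐ[ℂ] L :=
  IsFractionRing.algEquivOfAlgEquiv (Polynomial.algEquivAevalXAddC (-1 : ℂ))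

/-- Left multiplication by a rational function, as a ℂ-linear endomorphism of ℂ(x). -/
def mulE (f : L) : Module.End ℂ L := Algebra.lmul ℂ L f

/-- `δ` as an endomorphism: `g(x) ↦ g(x-1)`. -/
def deltaE : Module.End ℂ L := deltaL.toLinearMap
/-- `δ⁻¹` as an endomorphism: `g(x) ↦ g(x+1)`. -/
def deltaInvE : Module.End ℂ L := deltaL.symm.toLinearMap
/-- `τ` as an endomorphism: `g(x) ↦ g(-x)`. -/
def tauE : Module.End ℂ L := tauL.toLinearMap

/-- The skew group algebra `ℂ(x)#ℤ`, realized (via its faithful action on `ℂ(x)`) as the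
subalgebra of `End_ℂ(ℂ(x))` generated by all multiplication operators `f·` together with
the shift automorphisms `δ` and `δ⁻¹`; its elements are exactly the finite sums
`Σ fₖ δᵏ`. -/
def CxZ : Subalgebra ℂ (Module.End ℂ L) :=
  Algebra.adjoin ℂ (Set.range mulE ∪ {deltaE, deltaInvE})

/-- `q(x) ∈ ℂ(x)` for a polynomial `q`. -/
def pol (q : ℂ[X]) : L := algebraMap ℂ[X] L q

/-- The constant rational function `c`. -/
def cst (c : ℂ) : L := algebraMap ℂ L c

/-- The image of `φ(u) = x²`. -/
def phiU : Module.End ℂ L := mulE (xL ^ 2)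

/-- The prescribed value of `φ(-v-w)`. -/
def phiMVW (q : ℂ[X]) : Module.End ℂ L :=
  (1/2 : ℂ) • (mulE (pol q / (cst (1/2) + xL)) * deltaInvE
    + mulE (tauL (pol q) / (cst (1/2) - xL)) * deltaE
    - mulE (cst (q.eval (-(1/2 : ℂ))) / ((cst (1/2) + xL) * (cst (1/2) - xL))))

/-- The prescribed value of `φ(-(1/2)v-w)`. -/
def phiMHVW (q : ℂ[X]) : Module.End ℂ L :=
  (1/2 : ℂ) • (mulE (pol q / xL) * deltaInvE - mulE (tauL (pol q) / xL) * deltaE)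

end KleinD

namespace KleinD

/-- The `S₂`-invariant subalgebra `(ℂ(x)#ℤ)^{S₂}`, as a subset of `End_ℂ(ℂ(x))`:
those elements of `ℂ(x)#ℤ` fixed by conjugation by `τ`. -/
def CxZS2 : Set (Module.End ℂ L) := {Y | Y ∈ CxZ ∧ tauE * Y * tauE = Y}

end KleinD


/-!
Model `ℂ(x)#ℤ` by the operators `Σ fⱼ δʲ` on `ℂ(x)`. Averaging over `S₂` writes every invariant
element as a sum of symmetric pairs `f δ⁻ⁿ + τ(f) δⁿ`, so it suffices to reach every symmetric
pair, by induction on `n`. With `T = φ(-v-w)` and `R = φ(-(1/2)v-w)`, both `Tⁿ` and `R Tⁿ⁻¹`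
agree modulo `δ`-degree `< n` with symmetric pairs, with leading coefficients `uₙ` and `r uₙ`
where `r = (1/2 + x)/x`. As `τ(r) ≠ r`, the elements `uₙ, r uₙ` form a basis of `ℂ(x)` over
`ℂ(x²)`, so any `f` is `g uₙ + h r uₙ` with `g, h` even, and `g Tⁿ + h R Tⁿ⁻¹` is an invariant
element of `ℂ(x²)·φ(D(q))` whose difference with the pair of `f` has lower degree. On the right,
`Tⁿ g` has leading coefficient `uₙ δ⁻ⁿ(g)`, and as `g` runs over the even functions, `δ⁻ⁿ(g)`
runs over the fixed field of the reflection `x ↦ -x - 2n`, which does not fix `r` either.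
-/

theorem exists_fixed_mul_add_mul_eq {K F : Type*} [Field K] [FunLike F K K] [RingHomClass F K K]
    (e : F) (he : Function.Involutive e) {u w : K} (hu : u ≠ 0) (hw : e w ≠ w) (f : K) :
    ∃ g h : K, e g = g ∧ e h = h ∧ g * u + h * (w * u) = f := by
  -- Cramer's rule for `g u + h v = f`, `g e(u) + h e(v) = e(f)` with `v = w u`.
  set d := u * e u * (e w - w) with hd
  have hd0 : d ≠ 0 :=
    mul_ne_zero (mul_ne_zero hu ((map_ne_zero e).mpr hu)) (sub_ne_zero.mpr hw)
  have hed : e d = -d := by simp only [hd, map_mul, map_sub, he _]; ring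
  refine ⟨(f * e (w * u) - e f * (w * u)) / d, (e f * u - f * e u) / d, ?_, ?_, ?_⟩
  · rw [map_div₀, hed, div_neg, ← neg_div]
    simp only [map_sub, map_mul, he _]
    ring
  · rw [map_div₀, hed, div_neg, ← neg_div]
    simp only [map_sub, map_mul, he _]
    ring
  · rw [div_mul_eq_mul_div, div_mul_eq_mul_div, ← add_div, div_eq_iff hd0, hd, map_mul]
    ring

namespace KleinD

open scoped Pointwise

lemma algEquiv_ext_xL {e₁ e₂ : L ≃ₐ[ℂ] L} (h : e₁ xL = e₂ xL) : e₁ = e₂ := by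
  have hpol : (e₁ : L →ₐ[ℂ] L).comp (IsScalarTower.toAlgHom ℂ ℂ[X] L)
      = (e₂ : L →ₐ[ℂ] L).comp (IsScalarTower.toAlgHom ℂ ℂ[X] L) :=
    Polynomial.algHom_ext (by simpa [xL] using h)
  ext z
  exact DFunLike.congr_fun (IsLocalization.ringHom_ext (nonZeroDivisors ℂ[X])
    (j := (e₁ : L →+* L)) (k := (e₂ : L →+* L)) (congrArg AlgHom.toRingHom hpol)) z

lemma xL_add_algebraMap_ne_zero (c : ℂ) : xL + algebraMap ℂ L c ≠ 0 := fun h =>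
  RatFunc.transcendental_X (K := ℂ) <| by
    rw [← xL, eq_neg_of_add_eq_zero_left h, ← map_neg]
    exact isAlgebraic_algebraMap _

lemma xL_add_intCast_ne_zero (k : ℤ) : xL + k ≠ 0 := by
  simpa using xL_add_algebraMap_ne_zero k

lemma cst_half_add_xL_ne_zero : cst (1 / 2) + xL ≠ 0 := by
  rw [add_comm]; exact xL_add_algebraMap_ne_zero _

lemma tauL_cst (c : ℂ) : tauL (cst c) = cst c := tauL.commutes c

lemma tauL_xL : tauL xL = -xL := by
  rw [xL, ← RatFunc.algebraMap_X, tauL, IsFractionRing.algEquivOfAlgEquiv_algebraMap]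
  simp

lemma deltaL_xL : deltaL xL = xL - 1 := by
  rw [xL, ← RatFunc.algebraMap_X, deltaL, IsFractionRing.algEquivOfAlgEquiv_algebraMap]
  simp [sub_eq_add_neg]

lemma tauL_involutive : Function.Involutive tauL := by
  have h : tauL * tauL = 1 := algEquiv_ext_xL (by simp [tauL_xL])
  exact fun z => DFunLike.congr_fun h z

def shift (j : ℤ) : L ≃ₐ[ℂ] L := deltaL ^ j

lemma shift_add (i j : ℤ) (z : L) : shift (i + j) z = shift i (shift j z) := by
  rw [shift, zpow_add, AlgEquiv.mul_apply]; rfl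

@[simp] lemma shift_zero (z : L) : shift 0 z = z := rfl

lemma shift_one_xL : shift 1 xL = xL - 1 := by
  rw [shift, zpow_one, deltaL_xL]

lemma shift_neg_shift (j : ℤ) (z : L) : shift (-j) (shift j z) = z := by
  rw [← shift_add, neg_add_cancel, shift_zero]

lemma shift_xL (j : ℤ) : shift j xL = xL - j := by
  induction j using Int.induction_on with
  | zero => simp
  | succ i ih =>
    rw [shift_add, shift_one_xL, map_sub, map_one, ih]
    push_cast; ring
  | pred i ih =>
    have h : shift (-i) xL = shift (-i - 1) xL - 1 := by
      rw [← sub_add_cancel (-(i : ℤ)) 1, shift_add, add_sub_cancel_right, shift_one_xL, map_sub,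
        map_one]
    push_cast at ih ⊢
    linear_combination ih - h

lemma tauL_shift (j : ℤ) (z : L) : tauL (shift j z) = shift (-j) (tauL z) := by
  have h : tauL * shift j = shift (-j) * tauL :=
    algEquiv_ext_xL (by simp [tauL_xL, shift_xL]; ring)
  exact DFunLike.congr_fun h z

def reflect (k : ℤ) : L ≃ₐ[ℂ] L := shift (-k) * tauL * shift k

lemma reflect_xL (k : ℤ) : reflect k xL = -xL - 2 * k := by
  simp only [reflect, AlgEquiv.mul_apply, shift_xL, map_sub, map_neg, tauL_xL, map_intCast]
  push_cast; ring

lemma reflect_involutive (k : ℤ) : Function.Involutive (reflect k) := by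
  have h : reflect k * reflect k = 1 :=
    algEquiv_ext_xL (by simp [reflect_xL, map_sub, map_mul, map_ofNat])
  exact fun z => DFunLike.congr_fun h z

lemma shift_reflect (k : ℤ) (z : L) : shift k (reflect k z) = tauL (shift k z) := by
  simp only [reflect, AlgEquiv.mul_apply, ← shift_add, add_neg_cancel, shift_zero]

lemma reflect_zero : reflect 0 = tauL := by
  ext z; simp [reflect, AlgEquiv.mul_apply]

lemma tauL_symm_apply (z : L) : tauL.symm z = tauL z := by
  rw [AlgEquiv.symm_apply_eq, tauL_involutive]

lemma mulE_one : mulE 1 = 1 := map_one (Algebra.lmul ℂ L)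

def shiftE (j : ℤ) : Module.End ℂ L := (shift j).toLinearMap

lemma shiftE_one : shiftE 1 = deltaE := by
  ext z; simp [shiftE, shift, deltaE]

lemma shiftE_neg_one : shiftE (-1) = deltaInvE := by
  ext z; simp [shiftE, shift, deltaInvE]

lemma mulE_mul_mulE (f g : L) : mulE f * mulE g = mulE (f * g) :=
  (map_mul (Algebra.lmul ℂ L) f g).symm

lemma shiftE_mul_mulE (j : ℤ) (f : L) : shiftE j * mulE f = mulE (shift j f) * shiftE j := by
  ext z; simp [shiftE, mulE]

def skewMonomial (f : L) (j : ℤ) : Module.End ℂ L := mulE f * shiftE j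

lemma mulE_eq_skewMonomial (f : L) : mulE f = skewMonomial f 0 := by
  ext z; simp [skewMonomial, shiftE]

lemma skewMonomial_mul_skewMonomial (f g : L) (i j : ℤ) :
    skewMonomial f i * skewMonomial g j = skewMonomial (f * shift i g) (i + j) := by
  ext z; simp [skewMonomial, shiftE, mulE, shift_add, mul_assoc]

lemma mulE_mul_skewMonomial (g f : L) (j : ℤ) :
    mulE g * skewMonomial f j = skewMonomial (g * f) j := by
  rw [skewMonomial, skewMonomial, ← mul_assoc, mulE_mul_mulE]

lemma skewMonomial_mul_mulE (f g : L) (j : ℤ) :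
    skewMonomial f j * mulE g = skewMonomial (f * shift j g) j := by
  rw [skewMonomial, skewMonomial, mul_assoc, shiftE_mul_mulE, ← mul_assoc, mulE_mul_mulE]

lemma skewMonomial_add (f g : L) (j : ℤ) :
    skewMonomial (f + g) j = skewMonomial f j + skewMonomial g j := by
  simp [skewMonomial, mulE, add_mul]

lemma skewMonomial_smul (c : ℂ) (f : L) (j : ℤ) :
    skewMonomial (c • f) j = c • skewMonomial f j := by
  simp [skewMonomial, mulE]

def conjTau : Module.End ℂ L ≃ₐ[ℂ] Module.End ℂ L := tauL.toLinearEquiv.conjAlgEquiv ℂ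

lemma conjTau_apply (Y : Module.End ℂ L) : conjTau Y = tauE * Y * tauE := by
  ext z; simp [conjTau, LinearEquiv.conjAlgEquiv_apply, tauE, tauL_symm_apply]

lemma conjTau_mulE (f : L) : conjTau (mulE f) = mulE (tauL f) := by
  ext z; simp [conjTau_apply, tauE, mulE, tauL_involutive _]

lemma conjTau_shiftE (j : ℤ) : conjTau (shiftE j) = shiftE (-j) := by
  ext z; simp [conjTau_apply, tauE, shiftE, tauL_shift, tauL_involutive _]

lemma conjTau_skewMonomial (f : L) (j : ℤ) :
    conjTau (skewMonomial f j) = skewMonomial (tauL f) (-j) := by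
  rw [skewMonomial, map_mul, conjTau_mulE, conjTau_shiftE, skewMonomial]

def symPair (f : L) (n : ℕ) : Module.End ℂ L :=
  skewMonomial f (-n) + skewMonomial (tauL f) n

lemma symPair_zero (f : L) : symPair f 0 = mulE (f + tauL f) := by
  simp [symPair, mulE_eq_skewMonomial, skewMonomial_add]

lemma symPair_add (f g : L) (n : ℕ) : symPair (f + g) n = symPair f n + symPair g n := by
  simp only [symPair, map_add, skewMonomial_add]; abel

lemma symPair_smul (c : ℂ) (f : L) (n : ℕ) : symPair (c • f) n = c • symPair f n := by
  rw [symPair, symPair, show tauL (c • f) = c • tauL f from tauL.toLinearMap.map_smul c f,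
    skewMonomial_smul, skewMonomial_smul, smul_add]

lemma conjTau_symPair (f : L) (n : ℕ) : conjTau (symPair f n) = symPair f n := by
  simp [symPair, conjTau_skewMonomial, tauL_involutive _, add_comm]

lemma mulE_mul_symPair {g : L} (hg : tauL g = g) (u : L) (n : ℕ) :
    mulE g * symPair u n = symPair (g * u) n := by
  simp [symPair, mul_add, mulE_mul_skewMonomial, hg]

lemma symPair_mul_mulE {g : L} (hg : tauL g = g) (u : L) (n : ℕ) :
    symPair u n * mulE g = symPair (u * shift (-n) g) n := by
  simp [symPair, add_mul, skewMonomial_mul_mulE, tauL_shift, hg]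

lemma symPair_one_mul_symPair (a u : L) (n : ℕ) :
    symPair a 1 * symPair u (n + 1)
      = symPair (a * shift (-1) u) (n + 2) + symPair (tauL a * shift 1 u) n := by
  simp only [symPair, add_mul, mul_add, skewMonomial_mul_skewMonomial, map_mul, tauL_shift,
    tauL_involutive _]
  push_cast
  ring_nf
  abel

def skewSpan (s : Set ℤ) : Submodule ℂ (Module.End ℂ L) :=
  Submodule.span ℂ (Set.image2 skewMonomial Set.univ s)

lemma skewMonomial_mem_skewSpan (f : L) {s : Set ℤ} {j : ℤ} (hj : j ∈ s) :
    skewMonomial f j ∈ skewSpan s :=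
  Submodule.subset_span (Set.mem_image2_of_mem (Set.mem_univ f) hj)

lemma skewSpan_mono {s t : Set ℤ} (h : s ⊆ t) : skewSpan s ≤ skewSpan t :=
  Submodule.span_mono (Set.image2_subset_left h)

lemma skewSpan_mul_skewSpan (s t : Set ℤ) : skewSpan s * skewSpan t ≤ skewSpan (s + t) := by
  rw [skewSpan, skewSpan, Submodule.span_mul_span]
  apply Submodule.span_le.mpr
  rintro _ ⟨_, ⟨f, -, i, hi, rfl⟩, _, ⟨g, -, j, hj, rfl⟩, rfl⟩
  simpa only [SetLike.mem_coe, skewMonomial_mul_skewMonomial] using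
    skewMonomial_mem_skewSpan _ (Set.add_mem_add hi hj)

lemma CxZ_le_skewSpan_univ : Subalgebra.toSubmodule CxZ ≤ skewSpan Set.univ := by
  have hone : (1 : Module.End ℂ L) ∈ skewSpan Set.univ := by
    rw [← mulE_one, mulE_eq_skewMonomial]
    exact skewMonomial_mem_skewSpan 1 (Set.mem_univ 0)
  let A := (skewSpan Set.univ).toSubalgebra hone fun _ _ hX hY =>
    by simpa using skewSpan_mul_skewSpan _ _ (Submodule.mul_mem_mul hX hY)
  suffices CxZ ≤ A from this
  refine Algebra.adjoin_le ?_
  rintro _ (⟨f, rfl⟩ | rfl | rfl)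
  · exact (mulE_eq_skewMonomial f).symm ▸ skewMonomial_mem_skewSpan f (Set.mem_univ 0)
  · show deltaE ∈ skewSpan Set.univ
    rw [← shiftE_one, ← one_mul (shiftE 1), ← mulE_one]
    exact skewMonomial_mem_skewSpan 1 (Set.mem_univ 1)
  · show deltaInvE ∈ skewSpan Set.univ
    rw [← shiftE_neg_one, ← one_mul (shiftE (-1)), ← mulE_one]
    exact skewMonomial_mem_skewSpan 1 (Set.mem_univ (-1))

abbrev skewSpanLE (k : ℕ) : Submodule ℂ (Module.End ℂ L) := skewSpan {j | j.natAbs ≤ k}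

lemma skewSpanLE_mono {i j : ℕ} (h : i ≤ j) : skewSpanLE i ≤ skewSpanLE j :=
  skewSpan_mono fun _ hk => le_trans hk h

lemma mul_mem_skewSpanLE {i j : ℕ} {Y Z : Module.End ℂ L} (hY : Y ∈ skewSpanLE i)
    (hZ : Z ∈ skewSpanLE j) : Y * Z ∈ skewSpanLE (i + j) := by
  refine skewSpan_mono ?_ (skewSpan_mul_skewSpan _ _ (Submodule.mul_mem_mul hY hZ))
  rintro _ ⟨a, ha, b, hb, rfl⟩
  simp only [Set.mem_ofPred_eq] at ha hb ⊢
  omega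

lemma mulE_mem_skewSpanLE (f : L) : mulE f ∈ skewSpanLE 0 :=
  (mulE_eq_skewMonomial f).symm ▸ skewMonomial_mem_skewSpan f (by simp)

lemma symPair_mem_skewSpanLE (f : L) (n : ℕ) : symPair f n ∈ skewSpanLE n :=
  add_mem (skewMonomial_mem_skewSpan _ (by simp)) (skewMonomial_mem_skewSpan _ (by simp))

/-- Averaging over `S₂`: `Y = (Y + τYτ)/2`, and `Y ↦ Y + τYτ` sends skew monomials to
symmetric pairs. -/
lemma mem_of_conjTau_eq {s : Set ℤ} (hs : ∀ j ∈ s, -j ∈ s) {S : Submodule ℂ (Module.End ℂ L)}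
    (hS : ∀ (f : L) (n : ℕ), (n : ℤ) ∈ s → symPair f n ∈ S) {Y : Module.End ℂ L}
    (hY : Y ∈ skewSpan s) (hYτ : conjTau Y = Y) : Y ∈ S := by
  have hsym : skewSpan s ≤ S.comap (LinearMap.id + conjTau.toLinearMap) := by
    refine Submodule.span_le.mpr ?_
    rintro _ ⟨f, -, j, hj, rfl⟩
    obtain ⟨n, rfl | rfl⟩ := Int.eq_nat_or_neg j
    · simpa [symPair, conjTau_skewMonomial, tauL_involutive _, add_comm] using
        hS (tauL f) n hj
    · simpa [symPair, conjTau_skewMonomial] using hS f n (by simpa using hs _ hj)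
  have h := S.smul_mem (1 / 2 : ℂ) (hsym hY)
  rwa [LinearMap.add_apply, AlgEquiv.toLinearMap_apply, hYτ, LinearMap.id_apply, ← two_smul ℂ,
    smul_smul, one_div_mul_cancel two_ne_zero, one_smul] at h

lemma symPair_mem_of_approx {S : Submodule ℂ (Module.End ℂ L)}
    (h0 : ∀ f : L, symPair f 0 ∈ S)
    (hstep : ∀ (k : ℕ) (f : L),
      ∃ Z ∈ S, conjTau Z = Z ∧ Z - symPair f (k + 1) ∈ skewSpanLE k)
    (n : ℕ) (f : L) : symPair f n ∈ S := by
  induction n using Nat.strong_induction_on generalizing f with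
  | _ n IH =>
    obtain _ | k := n
    · exact h0 f
    obtain ⟨Z, hZ, hZτ, hZf⟩ := hstep k f
    have hlow : Z - symPair f (k + 1) ∈ S :=
      mem_of_conjTau_eq (fun j hj => by simpa using hj)
        (fun g n hn => IH n (by simp at hn; omega) g) hZf
        (by rw [map_sub, hZτ, conjTau_symPair])
    simpa using S.sub_mem hZ hlow

section Generators

variable (q : ℂ[X])

def coeffT : L := pol q / (cst (1 / 2) + xL)

def constT : L := cst (q.eval (-(1 / 2 : ℂ))) / ((cst (1 / 2) + xL) * (cst (1 / 2) - xL))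

def ratio : L := (cst (1 / 2) + xL) / xL

lemma tauL_constT : tauL (constT q) = constT q := by
  simp only [constT, map_div₀, map_mul, map_add, map_sub, tauL_cst, tauL_xL]
  ring

lemma phiMVW_eq : phiMVW q = (1 / 2 : ℂ) • (symPair (coeffT q) 1 - mulE (constT q)) := by
  rw [phiMVW, symPair, skewMonomial, skewMonomial, Nat.cast_one, shiftE_one, shiftE_neg_one,
    coeffT, constT, map_div₀, map_add, tauL_cst, tauL_xL, ← sub_eq_add_neg]

lemma phiMHVW_eq : phiMHVW q = (1 / 2 : ℂ) • symPair (ratio * coeffT q) 1 := by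
  have h : ratio * coeffT q = pol q / xL := by
    rw [ratio, coeffT, div_mul_div_comm, mul_comm, mul_div_mul_right _ _ cst_half_add_xL_ne_zero]
  have hτ : mulE (tauL (pol q / xL)) = -mulE (tauL (pol q) / xL) := by
    rw [map_div₀, tauL_xL, show tauL (pol q) / -xL = -(tauL (pol q) / xL) by ring]
    exact map_neg (Algebra.lmul ℂ L) _
  rw [phiMHVW, symPair, skewMonomial, skewMonomial, Nat.cast_one, shiftE_one, shiftE_neg_one, h,
    hτ, neg_mul, ← sub_eq_add_neg]

lemma conjTau_phiMVW : conjTau (phiMVW q) = phiMVW q := by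
  rw [phiMVW_eq, map_smul, map_sub, conjTau_symPair, conjTau_mulE, tauL_constT]

lemma conjTau_phiMHVW : conjTau (phiMHVW q) = phiMHVW q := by
  rw [phiMHVW_eq, map_smul, conjTau_symPair]

lemma phiMVW_mem_skewSpanLE : phiMVW q ∈ skewSpanLE 1 := by
  rw [phiMVW_eq]
  exact Submodule.smul_mem _ _ (sub_mem (symPair_mem_skewSpanLE _ _)
    (skewSpanLE_mono zero_le_one (mulE_mem_skewSpanLE _)))

lemma phiMHVW_mem_skewSpanLE : phiMHVW q ∈ skewSpanLE 1 := by
  rw [phiMHVW_eq]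
  exact Submodule.smul_mem _ _ (symPair_mem_skewSpanLE _ _)

lemma phiMVW_mul_symPair_sub_mem (u : L) (k : ℕ) :
    phiMVW q * symPair u (k + 1) - symPair ((1 / 2 : ℂ) • (coeffT q * shift (-1) u)) (k + 2)
      ∈ skewSpanLE (k + 1) := by
  have h : phiMVW q * symPair u (k + 1)
      - symPair ((1 / 2 : ℂ) • (coeffT q * shift (-1) u)) (k + 2)
      = (1 / 2 : ℂ) • symPair (tauL (coeffT q) * shift 1 u) k
        - (1 / 2 : ℂ) • (mulE (constT q) * symPair u (k + 1)) := by
    rw [phiMVW_eq, smul_mul_assoc, sub_mul, symPair_one_mul_symPair, symPair_smul]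
    module
  rw [h]
  refine sub_mem (Submodule.smul_mem _ _ ?_) (Submodule.smul_mem _ _ ?_)
  · exact skewSpanLE_mono k.le_succ (symPair_mem_skewSpanLE _ _)
  · simpa using mul_mem_skewSpanLE (mulE_mem_skewSpanLE _) (symPair_mem_skewSpanLE u (k + 1))

lemma phiMHVW_mul_symPair_sub_mem (u : L) (k : ℕ) :
    phiMHVW q * symPair u (k + 1)
      - symPair ((1 / 2 : ℂ) • (ratio * coeffT q * shift (-1) u)) (k + 2)
      ∈ skewSpanLE (k + 1) := by
  have h : phiMHVW q * symPair u (k + 1)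
      - symPair ((1 / 2 : ℂ) • (ratio * coeffT q * shift (-1) u)) (k + 2)
      = (1 / 2 : ℂ) • symPair (tauL (ratio * coeffT q) * shift 1 u) k := by
    rw [phiMHVW_eq, smul_mul_assoc, symPair_one_mul_symPair, symPair_smul]
    module
  rw [h]
  exact Submodule.smul_mem _ _ (skewSpanLE_mono k.le_succ (symPair_mem_skewSpanLE _ _))

def leadT : ℕ → L
  | 0 => 1
  | k + 1 => (1 / 2 : ℂ) • (coeffT q * shift (-1) (leadT k))

lemma phiMVW_pow_sub_mem (k : ℕ) :
    phiMVW q ^ (k + 1) - symPair (leadT q (k + 1)) (k + 1) ∈ skewSpanLE k := by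
  induction k with
  | zero =>
    have h : phiMVW q ^ 1 - symPair (leadT q 1) 1 = -((1 / 2 : ℂ) • mulE (constT q)) := by
      rw [pow_one, phiMVW_eq, leadT, leadT, map_one, mul_one, symPair_smul]
      module
    rw [h]
    exact neg_mem (Submodule.smul_mem _ _ (mulE_mem_skewSpanLE _))
  | succ k ih =>
    have h : phiMVW q ^ (k + 2) - symPair (leadT q (k + 2)) (k + 2)
        = phiMVW q * (phiMVW q ^ (k + 1) - symPair (leadT q (k + 1)) (k + 1))
          + (phiMVW q * symPair (leadT q (k + 1)) (k + 1)
            - symPair (leadT q (k + 2)) (k + 2)) := by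
      rw [pow_succ' _ (k + 1), mul_sub]
      abel
    rw [h]
    refine add_mem ?_ (phiMVW_mul_symPair_sub_mem q _ k)
    simpa [add_comm] using mul_mem_skewSpanLE (phiMVW_mem_skewSpanLE q) ih

lemma phiMHVW_mul_pow_sub_mem (k : ℕ) :
    phiMHVW q * phiMVW q ^ k - symPair (ratio * leadT q (k + 1)) (k + 1) ∈ skewSpanLE k := by
  cases k with
  | zero =>
    rw [pow_zero, mul_one, phiMHVW_eq, leadT, leadT, map_one, mul_one, mul_smul_comm,
      symPair_smul, sub_self]
    exact zero_mem _
  | succ k =>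
    have h : phiMHVW q * phiMVW q ^ (k + 1) - symPair (ratio * leadT q (k + 2)) (k + 2)
        = phiMHVW q * (phiMVW q ^ (k + 1) - symPair (leadT q (k + 1)) (k + 1))
          + (phiMHVW q * symPair (leadT q (k + 1)) (k + 1) - symPair
              ((1 / 2 : ℂ) • (ratio * coeffT q * shift (-1) (leadT q (k + 1)))) (k + 2)) := by
      rw [leadT, mul_smul_comm, ← mul_assoc, mul_sub]
      abel
    rw [h]
    refine add_mem ?_ (phiMHVW_mul_symPair_sub_mem q _ k)
    simpa [add_comm] using
      mul_mem_skewSpanLE (phiMHVW_mem_skewSpanLE q) (phiMVW_pow_sub_mem q k)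

variable {q}

lemma leadT_ne_zero (hq : q ≠ 0) (k : ℕ) : leadT q k ≠ 0 := by
  induction k with
  | zero => exact one_ne_zero
  | succ k ih =>
    refine smul_ne_zero (by norm_num) (mul_ne_zero (div_ne_zero ?_ cst_half_add_xL_ne_zero)
      ((_root_.map_ne_zero _).mpr ih))
    simpa [pol] using hq

end Generators

lemma reflect_ratio_ne (k : ℤ) : reflect k ratio ≠ ratio := by
  have hx : (xL : L) ≠ 0 := RatFunc.X_ne_zero
  have hden : -xL - 2 * (k : L) ≠ 0 := fun h0 =>
    xL_add_intCast_ne_zero (2 * k) (by push_cast; linear_combination -h0)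
  intro h
  rw [ratio, map_div₀, map_add, reflect_xL, cst, AlgEquiv.commutes, div_eq_div_iff hden hx] at h
  apply xL_add_intCast_ne_zero k
  simp only [map_div₀, map_one, map_ofNat] at h
  linear_combination h

variable {q : ℂ[X]}

lemma symPair_mem_of_left (hq : q ≠ 0) {S : Submodule ℂ (Module.End ℂ L)}
    (hS : ∀ g : L, tauL g = g → ∀ n : ℕ,
      mulE g * phiMVW q ^ n ∈ S ∧ mulE g * (phiMHVW q * phiMVW q ^ n) ∈ S)
    (n : ℕ) (f : L) : symPair f n ∈ S := by
  refine symPair_mem_of_approx (fun f => ?_) (fun k f => ?_) n f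
  · simpa [symPair_zero] using
      (hS (f + tauL f) (by rw [map_add, tauL_involutive, add_comm]) 0).1
  set u := leadT q (k + 1)
  obtain ⟨g, h, hg, hh, rfl⟩ := exists_fixed_mul_add_mul_eq tauL tauL_involutive
    (leadT_ne_zero hq (k + 1)) (reflect_zero ▸ reflect_ratio_ne 0) f
  refine ⟨mulE g * phiMVW q ^ (k + 1) + mulE h * (phiMHVW q * phiMVW q ^ k),
    add_mem (hS g hg _).1 (hS h hh _).2, ?_, ?_⟩
  · simp only [map_add, map_mul, map_pow, conjTau_mulE, conjTau_phiMVW, conjTau_phiMHVW, hg, hh]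
  have e : mulE g * phiMVW q ^ (k + 1) + mulE h * (phiMHVW q * phiMVW q ^ k)
      - symPair (g * u + h * (ratio * u)) (k + 1)
      = mulE g * (phiMVW q ^ (k + 1) - symPair u (k + 1))
        + mulE h * (phiMHVW q * phiMVW q ^ k - symPair (ratio * u) (k + 1)) := by
    rw [mul_sub, mul_sub, mulE_mul_symPair hg, mulE_mul_symPair hh, symPair_add]
    abel
  rw [e]
  exact add_mem
    (by simpa using mul_mem_skewSpanLE (mulE_mem_skewSpanLE g) (phiMVW_pow_sub_mem q k))
    (by simpa using mul_mem_skewSpanLE (mulE_mem_skewSpanLE h) (phiMHVW_mul_pow_sub_mem q k))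

lemma symPair_mem_of_right (hq : q ≠ 0) {S : Submodule ℂ (Module.End ℂ L)}
    (hS : ∀ g : L, tauL g = g → ∀ n : ℕ,
      phiMVW q ^ n * mulE g ∈ S ∧ phiMHVW q * phiMVW q ^ n * mulE g ∈ S)
    (n : ℕ) (f : L) : symPair f n ∈ S := by
  refine symPair_mem_of_approx (fun f => ?_) (fun k f => ?_) n f
  · simpa [symPair_zero] using
      (hS (f + tauL f) (by rw [map_add, tauL_involutive, add_comm]) 0).1
  set u := leadT q (k + 1)
  set m : ℤ := ((k + 1 : ℕ) : ℤ)
  obtain ⟨g, h, hg, hh, rfl⟩ := exists_fixed_mul_add_mul_eq (reflect m)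
    (reflect_involutive m) (leadT_ne_zero hq (k + 1)) (reflect_ratio_ne m) f
  have hg' : tauL (shift m g) = shift m g := by rw [← shift_reflect, hg]
  have hh' : tauL (shift m h) = shift m h := by rw [← shift_reflect, hh]
  refine ⟨phiMVW q ^ (k + 1) * mulE (shift m g) + phiMHVW q * phiMVW q ^ k * mulE (shift m h),
    add_mem (hS _ hg' _).1 (hS _ hh' _).2, ?_, ?_⟩
  · simp only [map_add, map_mul, map_pow, conjTau_mulE, conjTau_phiMVW, conjTau_phiMHVW, hg', hh']
  have e : phiMVW q ^ (k + 1) * mulE (shift m g) + phiMHVW q * phiMVW q ^ k * mulE (shift m h)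
      - symPair (g * u + h * (ratio * u)) (k + 1)
      = (phiMVW q ^ (k + 1) - symPair u (k + 1)) * mulE (shift m g)
        + (phiMHVW q * phiMVW q ^ k - symPair (ratio * u) (k + 1)) * mulE (shift m h) := by
    rw [sub_mul, sub_mul, symPair_mul_mulE hg', symPair_mul_mulE hh', shift_neg_shift,
      shift_neg_shift, mul_comm g, mul_comm h, symPair_add]
    abel
  rw [e]
  exact add_mem
    (by simpa using mul_mem_skewSpanLE (phiMVW_pow_sub_mem q k) (mulE_mem_skewSpanLE _))
    (by simpa using mul_mem_skewSpanLE (phiMHVW_mul_pow_sub_mem q k) (mulE_mem_skewSpanLE _))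

lemma CxZS2_subset_of_symPair_mem {S : Submodule ℂ (Module.End ℂ L)}
    (hS : ∀ (n : ℕ) (f : L), symPair f n ∈ S) : CxZS2 ⊆ S := fun _ ⟨hY, hYτ⟩ =>
  mem_of_conjTau_eq (s := Set.univ) (fun _ _ => trivial) (fun f n _ => hS n f)
    (CxZ_le_skewSpan_univ hY) ((conjTau_apply _).trans hYτ)

def CxZS2Alg : Subalgebra ℂ (Module.End ℂ L) :=
  CxZ ⊓ AlgHom.equalizer conjTau.toAlgHom (AlgHom.id ℂ _)

lemma coe_CxZS2Alg : (CxZS2Alg : Set (Module.End ℂ L)) = CxZS2 := by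
  ext Y
  simp [CxZS2Alg, CxZS2, conjTau_apply]

lemma span_subset_CxZS2 {s : Set (Module.End ℂ L)} (hs : s ⊆ CxZS2Alg) :
    (Submodule.span ℂ s : Set (Module.End ℂ L)) ⊆ CxZS2 := by
  rw [← coe_CxZS2Alg]
  exact (Submodule.span_le (p := Subalgebra.toSubmodule CxZS2Alg)).mpr hs

lemma mulE_mem_CxZ (f : L) : mulE f ∈ CxZ := Algebra.subset_adjoin (Or.inl ⟨f, rfl⟩)

lemma deltaE_mem_CxZ : deltaE ∈ CxZ := Algebra.subset_adjoin (Or.inr (Or.inl rfl))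

lemma deltaInvE_mem_CxZ : deltaInvE ∈ CxZ := Algebra.subset_adjoin (Or.inr (Or.inr rfl))

lemma mulE_mem_CxZS2Alg {g : L} (hg : tauL g = g) : mulE g ∈ CxZS2Alg :=
  ⟨mulE_mem_CxZ g, by simp [conjTau_mulE, hg]⟩

lemma phiMVW_mem_CxZS2Alg : phiMVW q ∈ CxZS2Alg := by
  refine ⟨?_, by simp [conjTau_phiMVW]⟩
  unfold phiMVW
  apply_rules [Subalgebra.smul_mem, Subalgebra.sub_mem, Subalgebra.add_mem, Subalgebra.mul_mem,
    mulE_mem_CxZ, deltaE_mem_CxZ, deltaInvE_mem_CxZ]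

lemma phiMHVW_mem_CxZS2Alg : phiMHVW q ∈ CxZS2Alg := by
  refine ⟨?_, by simp [conjTau_phiMHVW]⟩
  unfold phiMHVW
  apply_rules [Subalgebra.smul_mem, Subalgebra.sub_mem, Subalgebra.mul_mem, mulE_mem_CxZ,
    deltaE_mem_CxZ, deltaInvE_mem_CxZ]

lemma map_mem_of_generators_mem {A : Type*} [Ring A] [Algebra ℂ A] {p₀ p₁ : ℂ[X]}
    (φ : Dq q p₀ p₁ →ₐ[ℂ] A) {S : Subalgebra ℂ A} (hu : φ (uD q p₀ p₁) ∈ S)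
    (hv : φ (vD q p₀ p₁) ∈ S) (hw : φ (wD q p₀ p₁) ∈ S) (d : Dq q p₀ p₁) :
    φ d ∈ S := by
  obtain ⟨x, rfl⟩ := RingQuot.mkAlgHom_surjective ℂ (DqRel q p₀ p₁) d
  induction x using FreeAlgebra.induction with
  | grade0 c => simpa only [AlgHom.commutes] using S.algebraMap_mem c
  | grade1 i => fin_cases i; exacts [hu, hv, hw]
  | mul a b ha hb => simpa only [map_mul] using S.mul_mem ha hb
  | add a b ha hb => simpa only [map_add] using S.add_mem ha hb

lemma map_mem_CxZS2Alg {p₀ p₁ : ℂ[X]} (φ : Dq q p₀ p₁ →ₐ[ℂ] Module.End ℂ L)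
    (hu : φ (uD q p₀ p₁) = phiU) (hvw : φ (-vD q p₀ p₁ - wD q p₀ p₁) = phiMVW q)
    (hhvw : φ (-(1 / 2 : ℂ) • vD q p₀ p₁ - wD q p₀ p₁) = phiMHVW q) (d : Dq q p₀ p₁) :
    φ d ∈ CxZS2Alg := by
  have hv : φ (vD q p₀ p₁) = (2 : ℂ) • (phiMHVW q - phiMVW q) := by
    rw [← hvw, ← hhvw, ← map_sub, ← map_smul]; congr 1; module
  have hw : φ (wD q p₀ p₁) = -phiMVW q - φ (vD q p₀ p₁) := by
    rw [← hvw, ← map_neg, ← map_sub]; congr 1; module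
  have hv_mem : φ (vD q p₀ p₁) ∈ CxZS2Alg :=
    hv ▸ Subalgebra.smul_mem _ (sub_mem phiMHVW_mem_CxZS2Alg phiMVW_mem_CxZS2Alg) _
  refine map_mem_of_generators_mem φ ?_ hv_mem ?_ d
  · exact hu ▸ mulE_mem_CxZS2Alg (by rw [map_pow, tauL_xL, neg_sq])
  · exact hw ▸ sub_mem (neg_mem phiMVW_mem_CxZS2Alg) hv_mem

end KleinD

open KleinD in
theorem statement1_general (q p₀ p₁ : Polynomial ℂ) (hq : 4 ≤ q.natDegree)
    (φ : Dq q p₀ p₁ →ₐ[ℂ] Module.End ℂ L)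
    (hu : φ (uD q p₀ p₁) = phiU)
    (hvw : φ (-vD q p₀ p₁ - wD q p₀ p₁) = phiMVW q)
    (hhvw : φ (-(1/2 : ℂ) • vD q p₀ p₁ - wD q p₀ p₁) = phiMHVW q) :
    (Submodule.span ℂ {Y : Module.End ℂ L |
        ∃ g : L, tauL g = g ∧ ∃ d : Dq q p₀ p₁, Y = mulE g * φ d} : Set (Module.End ℂ L))
      = CxZS2
    ∧ (Submodule.span ℂ {Y : Module.End ℂ L |
        ∃ g : L, tauL g = g ∧ ∃ d : Dq q p₀ p₁, Y = φ d * mulE g} : Set (Module.End ℂ L))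
      = CxZS2 := by
  have hq0 : q ≠ 0 := by rintro rfl; simp at hq
  have hφ := map_mem_CxZS2Alg φ hu hvw hhvw
  have hT (n : ℕ) : phiMVW q ^ n = φ ((-vD q p₀ p₁ - wD q p₀ p₁) ^ n) := by
    rw [map_pow, hvw]
  have hRT (n : ℕ) : phiMHVW q * phiMVW q ^ n
      = φ ((-(1/2 : ℂ) • vD q p₀ p₁ - wD q p₀ p₁) * (-vD q p₀ p₁ - wD q p₀ p₁) ^ n) := by
    rw [map_mul, map_pow, hvw, hhvw]
  refine ⟨subset_antisymm ?_ ?_, subset_antisymm ?_ ?_⟩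
  · exact span_subset_CxZS2 fun _ ⟨g, hg, d, hY⟩ =>
      hY ▸ mul_mem (mulE_mem_CxZS2Alg hg) (hφ d)
  · exact CxZS2_subset_of_symPair_mem <| symPair_mem_of_left hq0 fun g hg n =>
      ⟨Submodule.subset_span ⟨g, hg, _, by rw [hT]⟩,
        Submodule.subset_span ⟨g, hg, _, by rw [hRT]⟩⟩
  · exact span_subset_CxZS2 fun _ ⟨g, hg, d, hY⟩ =>
      hY ▸ mul_mem (hφ d) (mulE_mem_CxZS2Alg hg)
  · exact CxZS2_subset_of_symPair_mem <| symPair_mem_of_right hq0 fun g hg n =>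
      ⟨Submodule.subset_span ⟨g, hg, _, by rw [hT]⟩,
        Submodule.subset_span ⟨g, hg, _, by rw [hRT]⟩⟩

open KleinD in
/-- `ℂ(x²)·φ(D(q)) = (ℂ(x)#ℤ)^{S₂} = φ(D(q))·ℂ(x²)`, where the left- and
right-hand sides are the sets of finite sums `Σ gᵢ(x²)·φ(dᵢ)` resp. `Σ φ(dᵢ)·gᵢ(x²)` with
`gᵢ(x²)` a `τ`-invariant rational function and `dᵢ ∈ D(q)`; i.e. `D(q)` is a Galois ring
with respect to `ℂ[u]`. -/
theorem statement1 (q p₀ p₁ : Polynomial ℂ) (hq : 4 ≤ q.natDegree)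
    (hp : pCond q p₀ p₁)
    (φ : Dq q p₀ p₁ →ₐ[ℂ] Module.End ℂ L)
    (hinj : Function.Injective φ)
    (hu : φ (uD q p₀ p₁) = phiU)
    (hvw : φ (-vD q p₀ p₁ - wD q p₀ p₁) = phiMVW q)
    (hhvw : φ (-(1/2 : ℂ) • vD q p₀ p₁ - wD q p₀ p₁) = phiMHVW q) :
    (Submodule.span ℂ {Y : Module.End ℂ L |
        ∃ g : L, tauL g = g ∧ ∃ d : Dq q p₀ p₁, Y = mulE g * φ d} : Set (Module.End ℂ L))
      = CxZS2
    ∧ (Submodule.span ℂ {Y : Module.End ℂ L |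
        ∃ g : L, tauL g = g ∧ ∃ d : Dq q p₀ p₁, Y = φ d * mulE g} : Set (Module.End ℂ L))
      = CxZS2 :=
  statement1_general q p₀ p₁ hq φ hu hvw hhvw
end
end

section
/- Every element of φ(D(q)) preserves ℂ[x²]: for each X ∈ D(q), the operator φ(X), acting on ℂ(x) via the natural action of ℂ(x)#ℤ (where f·δᵏ acts by g(x) ↦ f(x)·g(x−k)), maps the subring ℂ[x²] of even polynomials into itself. Hence D(q) is a principal Galois order. -/
noncomputable section

open Polynomial

namespace KleinD

/-- `ℂ[x²] ⊆ ℂ(x)`: the subring of even polynomials, viewed inside the field of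
rational functions. -/
def evenPolySet : Set L := {f | ∃ r : Polynomial ℂ, f = pol (r.comp (Polynomial.X ^ 2))}

end KleinD

namespace KleinD

lemma pol_C (c : ℂ) : pol (C c) = cst c := by
  rw [pol, cst, show (C c : ℂ[X]) = algebraMap ℂ ℂ[X] c from rfl,
    ← IsScalarTower.algebraMap_apply]

lemma xL_eq : xL = pol X := (RatFunc.algebraMap_X).symm

lemma pol_injective : Function.Injective pol :=
  IsFractionRing.injective (Polynomial ℂ) L

lemma mulE_apply (f g : L) : mulE f g = f * g := rfl

lemma smul_pol (c : ℂ) (h : ℂ[X]) : c • pol h = pol (C c * h) := by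
  rw [Algebra.smul_def, pol, pol, map_mul, ← pol, ← pol, pol_C, cst]

lemma tauL_pol (h : ℂ[X]) : tauL (pol h) = pol (h.comp (-X)) := by
  rw [tauL, pol, IsFractionRing.algEquivOfAlgEquiv_algebraMap]
  simp [pol, comp_eq_aeval]

lemma deltaE_pol (h : ℂ[X]) : deltaE (pol h) = pol (h.comp (X - 1)) := by
  rw [deltaE, deltaL]
  show IsFractionRing.algEquivOfAlgEquiv _ (pol h) = _
  rw [pol, IsFractionRing.algEquivOfAlgEquiv_algebraMap,
    show (X - 1 : ℂ[X]) = X + C (-1) by rw [C_neg, C_1]; ring]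
  simp [pol, comp_eq_aeval]

lemma deltaInvE_pol (h : ℂ[X]) : deltaInvE (pol h) = pol (h.comp (X + 1)) := by
  rw [deltaInvE, deltaL]
  show (IsFractionRing.algEquivOfAlgEquiv _).symm (pol h) = _
  rw [IsFractionRing.algEquivOfAlgEquiv_symm, pol,
    IsFractionRing.algEquivOfAlgEquiv_algebraMap]
  rw [algEquivAevalXAddC_symm, neg_neg, show (X + 1 : ℂ[X]) = X + C 1 by rw [C_1]]
  simp [pol, comp_eq_aeval]

end KleinD
namespace KleinD

lemma poly_decomp (p : ℂ[X]) :
    ∃ a b : ℂ[X], p = a.comp (X ^ 2) + X * b.comp (X ^ 2) := by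
  induction p using Polynomial.induction_on' with
  | add p q hp hq =>
    obtain ⟨a, b, rfl⟩ := hp
    obtain ⟨c, d, rfl⟩ := hq
    exact ⟨a + c, b + d, by rw [add_comp, add_comp]; ring⟩
  | monomial n c =>
    rcases Nat.even_or_odd n with ⟨k, hk⟩ | ⟨k, hk⟩
    · refine ⟨C c * X ^ k, 0, ?_⟩
      rw [← C_mul_X_pow_eq_monomial, mul_comp, C_comp, pow_comp, X_comp, zero_comp,
        ← pow_mul, hk]
      ring
    · refine ⟨0, C c * X ^ k, ?_⟩
      rw [← C_mul_X_pow_eq_monomial, mul_comp, C_comp, pow_comp, X_comp, zero_comp,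
        ← pow_mul, hk]
      ring

lemma even_decomp (p : ℂ[X]) (h : p.comp (-X) = p) : ∃ r : ℂ[X], p = r.comp (X ^ 2) := by
  obtain ⟨a, b, hab⟩ := poly_decomp p
  have h2 : ((X : ℂ[X]) ^ 2).comp (-X) = X ^ 2 := by
    rw [pow_comp, X_comp, neg_sq]
  have e : a.comp (X ^ 2) + (-X) * b.comp (X ^ 2)
      = a.comp (X ^ 2) + X * b.comp (X ^ 2) := by
    conv_rhs => rw [← hab]
    rw [← h, hab, add_comp, mul_comp, comp_assoc, comp_assoc, h2, X_comp]
  have e2 : (2 * X : ℂ[X]) * b.comp (X ^ 2) = 0 := by linear_combination -e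
  rcases mul_eq_zero.mp e2 with h0 | h0
  · exact absurd h0 (by intro hc; simpa using congrArg (fun p => p.coeff 1) hc)
  · exact ⟨a, by rw [hab, h0, mul_zero, add_zero]⟩

lemma odd_decomp (p : ℂ[X]) (h : p.comp (-X) = -p) :
    ∃ s : ℂ[X], p = X * s.comp (X ^ 2) := by
  obtain ⟨a, b, hab⟩ := poly_decomp p
  have h2 : ((X : ℂ[X]) ^ 2).comp (-X) = X ^ 2 := by
    rw [pow_comp, X_comp, neg_sq]
  have e : a.comp (X ^ 2) + (-X) * b.comp (X ^ 2)
      = -(a.comp (X ^ 2) + X * b.comp (X ^ 2)) := by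
    conv_rhs => rw [← hab]
    rw [← h, hab, add_comp, mul_comp, comp_assoc, comp_assoc, h2, X_comp]
  have e2 : (2 : ℂ[X]) * a.comp (X ^ 2) = 0 := by linear_combination e
  rcases mul_eq_zero.mp e2 with h0 | h0
  · exact absurd h0 (by norm_num)
  · exact ⟨b, by rw [hab, h0, zero_add]⟩

/-- comp of an even polynomial with anything only depends on the square. -/
lemma comp_sq (r h : ℂ[X]) : (r.comp (X ^ 2)).comp h = r.comp (h ^ 2) := by
  rw [comp_assoc, pow_comp, X_comp]

end KleinD
namespace KleinD

lemma xL_ne : (xL : L) ≠ 0 := by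
  rw [xL_eq]
  intro hc
  exact X_ne_zero (pol_injective (by simpa [pol] using hc))

lemma pol_ne {h : ℂ[X]} (hh : h ≠ 0) : pol h ≠ 0 := fun hc =>
  hh (pol_injective (by simpa [pol] using hc))

lemma phiU_mem : ∀ f ∈ evenPolySet, phiU f ∈ evenPolySet := by
  rintro f ⟨r, rfl⟩
  refine ⟨X * r, ?_⟩
  rw [phiU, mulE_apply, xL_eq, mul_comp, X_comp]
  simp [pol, map_mul, map_pow]

lemma phiMHVW_mem (q : ℂ[X]) : ∀ f ∈ evenPolySet, phiMHVW q f ∈ evenPolySet := by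
  rintro f ⟨r, rfl⟩
  set g : ℂ[X] := r.comp (X ^ 2) with hgdef
  have key : ∀ A : ℂ[X], g.comp A = r.comp (A ^ 2) := comp_sq r
  have c1 : (g.comp (X + 1)).comp (-X) = g.comp (X - 1) := by
    rw [comp_assoc, add_comp, X_comp, one_comp, key, key]
    congr 1
    ring
  have c2 : (g.comp (X - 1)).comp (-X) = g.comp (X + 1) := by
    rw [comp_assoc, sub_comp, X_comp, one_comp, key, key]
    congr 1
    ring
  set N : ℂ[X] := q * g.comp (X + 1) - q.comp (-X) * g.comp (X - 1) with hNdef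
  have hN : N.comp (-X) = -N := by
    rw [hNdef]
    simp only [sub_comp, mul_comp, c1, c2, comp_neg_X_comp_neg_X]
    ring
  obtain ⟨s, hs⟩ := odd_decomp N hN
  rw [hNdef] at hs
  refine ⟨C (1/2 : ℂ) * s, ?_⟩
  rw [phiMHVW]
  simp only [LinearMap.smul_apply, LinearMap.sub_apply, Module.End.mul_apply, mulE_apply]
  rw [deltaInvE_pol, deltaE_pol, tauL_pol]
  have key2 : pol q * pol (g.comp (X + 1)) - pol (q.comp (-X)) * pol (g.comp (X - 1))
      = xL * pol (s.comp (X ^ 2)) := by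
    rw [xL_eq]
    have := congrArg pol hs
    simpa only [pol, map_mul, map_sub] using this
  have main : pol q / xL * pol (g.comp (X + 1))
      - pol (q.comp (-X)) / xL * pol (g.comp (X - 1)) = pol (s.comp (X ^ 2)) := by
    have hx := xL_ne
    field_simp
    linear_combination key2
  rw [main, smul_pol]
  congr 1
  rw [mul_comp, C_comp]

lemma phiMVW_mem (q : ℂ[X]) : ∀ f ∈ evenPolySet, phiMVW q f ∈ evenPolySet := by
  rintro f ⟨r, rfl⟩
  set g : ℂ[X] := r.comp (X ^ 2) with hgdef
  have key : ∀ A : ℂ[X], g.comp A = r.comp (A ^ 2) := comp_sq r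
  have c1 : (g.comp (X + 1)).comp (-X) = g.comp (X - 1) := by
    rw [comp_assoc, add_comp, X_comp, one_comp, key, key]; congr 1; ring
  have c2 : (g.comp (X - 1)).comp (-X) = g.comp (X + 1) := by
    rw [comp_assoc, sub_comp, X_comp, one_comp, key, key]; congr 1; ring
  have cg : g.comp (-X) = g := by
    rw [key, neg_sq, ← hgdef]
  set a : ℂ[X] := C (1/2 : ℂ) + X with hadef
  set b : ℂ[X] := C (1/2 : ℂ) - X with hbdef
  have ha : (a : ℂ[X]) ≠ 0 := fun hc => by
    rw [hadef] at hc
    simpa using congrArg (fun p => p.coeff 1) hc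
  have hb : (b : ℂ[X]) ≠ 0 := fun hc => by
    rw [hbdef] at hc
    simpa using congrArg (fun p => p.coeff 1) hc
  have hca : pol a ≠ 0 := pol_ne ha
  have hcb : pol b ≠ 0 := pol_ne hb
  have hac : a.comp (-X) = b := by
    rw [hadef, hbdef, add_comp, X_comp, C_comp]; ring
  have hbc : b.comp (-X) = a := by
    rw [hadef, hbdef, sub_comp, X_comp, C_comp]; ring
  set qv : ℂ := q.eval (-(1/2 : ℂ)) with hqv
  set N : ℂ[X] := q * g.comp (X + 1) * b + q.comp (-X) * g.comp (X - 1) * a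
      - C qv * g with hNdef
  have hN : N.comp (-X) = N := by
    rw [hNdef]
    simp only [sub_comp, add_comp, mul_comp, C_comp, c1, c2, hac, hbc, cg,
      comp_neg_X_comp_neg_X]
    ring
  obtain ⟨t₀, ht₀⟩ := even_decomp N hN
  have hroot : N.eval (-(1/2 : ℂ)) = 0 := by
    rw [hNdef, hadef, hbdef, hgdef, hqv]
    simp [eval_comp]
    ring_nf
  have ht₀root : t₀.IsRoot (1/4 : ℂ) := by
    have h := hroot
    rw [ht₀] at h
    have h4 : ((X : ℂ[X]) ^ 2).eval (-(1/2 : ℂ)) = (1/4 : ℂ) := by norm_num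
    rw [eval_comp, h4] at h
    exact h
  obtain ⟨t₁, ht₁⟩ := dvd_iff_isRoot.mpr ht₀root
  have habmul : a * b = C (1/4 : ℂ) - X ^ 2 := by
    rw [hadef, hbdef, show (C (1/4:ℂ)) = C (1/2:ℂ) * C (1/2:ℂ) by rw [← C_mul]; norm_num]
    ring
  have hNfac : q * g.comp (X + 1) * b + q.comp (-X) * g.comp (X - 1) * a - C qv * g
      = (a * b) * (-(t₁.comp (X ^ 2))) := by
    rw [← hNdef, ht₀, ht₁, mul_comp, sub_comp, X_comp, C_comp, habmul]
    ring
  have hcsta : cst (1/2 : ℂ) + xL = pol a := by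
    rw [hadef, xL_eq, ← pol_C, pol, pol, pol, map_add]
  have hcstb : cst (1/2 : ℂ) - xL = pol b := by
    rw [hbdef, xL_eq, ← pol_C, pol, pol, pol, map_sub]
  have hcstq : cst qv = pol (C qv) := (pol_C qv).symm
  refine ⟨C (-(1/2) : ℂ) * t₁, ?_⟩
  rw [phiMVW]
  simp only [LinearMap.smul_apply, LinearMap.sub_apply, LinearMap.add_apply,
    Module.End.mul_apply, mulE_apply]
  rw [deltaInvE_pol, deltaE_pol, tauL_pol, hcsta, hcstb, ← hqv, hcstq]
  have key2 : pol q * pol (g.comp (X + 1)) * pol b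
      + pol (q.comp (-X)) * pol (g.comp (X - 1)) * pol a
      - pol (C qv) * pol g = -(pol a * pol b * pol (t₁.comp (X ^ 2))) := by
    have := congrArg pol hNfac
    simpa only [pol, map_mul, map_sub, map_add, map_neg, mul_neg] using this
  have main : pol q / pol a * pol (g.comp (X + 1))
      + pol (q.comp (-X)) / pol b * pol (g.comp (X - 1))
      - pol (C qv) / (pol a * pol b) * pol g = -pol (t₁.comp (X ^ 2)) := by
    field_simp
    linear_combination key2
  rw [main]
  rw [show ((1/2:ℂ) • (-pol (t₁.comp (X ^ 2)))) = (-(1/2):ℂ) • pol (t₁.comp (X ^ 2)) by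
    rw [smul_neg, ← neg_smul]]
  rw [smul_pol]
  congr 1
  rw [mul_comp, C_comp]

end KleinD
namespace KleinD

lemma even_add {f g : L} (hf : f ∈ evenPolySet) (hg : g ∈ evenPolySet) :
    f + g ∈ evenPolySet := by
  obtain ⟨r, rfl⟩ := hf
  obtain ⟨s, rfl⟩ := hg
  exact ⟨r + s, by rw [add_comp]; simp [pol, map_add]⟩

lemma even_smul (c : ℂ) {f : L} (hf : f ∈ evenPolySet) : c • f ∈ evenPolySet := by
  obtain ⟨r, rfl⟩ := hf
  refine ⟨C c * r, ?_⟩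
  rw [smul_pol, mul_comp, C_comp]

lemma even_neg {f : L} (hf : f ∈ evenPolySet) : -f ∈ evenPolySet := by
  have := even_smul (-1 : ℂ) hf
  simpa using this

lemma even_sub {f g : L} (hf : f ∈ evenPolySet) (hg : g ∈ evenPolySet) :
    f - g ∈ evenPolySet := by
  rw [sub_eq_add_neg]
  exact even_add hf (even_neg hg)

end KleinD
open KleinD in
/-- Every element of `φ(D(q))` preserves `ℂ[x²]`: for each `X ∈ D(q)` the
operator `φ(X)` (acting on `ℂ(x)` via the natural action of `ℂ(x)#ℤ`) maps the subring of
even polynomials into itself.  Hence `D(q)` is a principal Galois order. -/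
theorem statement2 (q p₀ p₁ : Polynomial ℂ) (hq : 4 ≤ q.natDegree)
    (hp : pCond q p₀ p₁)
    (φ : Dq q p₀ p₁ →ₐ[ℂ] Module.End ℂ L)
    (hinj : Function.Injective φ)
    (hu : φ (uD q p₀ p₁) = phiU)
    (hvw : φ (-vD q p₀ p₁ - wD q p₀ p₁) = phiMVW q)
    (hhvw : φ (-(1/2 : ℂ) • vD q p₀ p₁ - wD q p₀ p₁) = phiMHVW q) :
    ∀ d : Dq q p₀ p₁, ∀ f ∈ evenPolySet, φ d f ∈ evenPolySet := by
  have hv : φ (vD q p₀ p₁) = (2:ℂ) • (phiMHVW q - phiMVW q) := by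
    have key : (1/2:ℂ) • φ (vD q p₀ p₁) = phiMHVW q - phiMVW q := by
      rw [← hhvw, ← hvw, ← map_smul, ← map_sub]
      congr 1
      module
    calc φ (vD q p₀ p₁) = (2:ℂ) • ((1/2:ℂ) • φ (vD q p₀ p₁)) := by
          rw [smul_smul]; norm_num
      _ = (2:ℂ) • (phiMHVW q - phiMVW q) := by rw [key]
  have hw : φ (wD q p₀ p₁) = -phiMVW q - φ (vD q p₀ p₁) := by
    rw [← hvw, map_sub, map_neg]
    abel
  have hvmem : ∀ f ∈ evenPolySet, φ (vD q p₀ p₁) f ∈ evenPolySet := by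
    intro f hf
    rw [hv]
    simp only [LinearMap.smul_apply, LinearMap.sub_apply]
    exact even_smul _ (even_sub (phiMHVW_mem q f hf) (phiMVW_mem q f hf))
  have hwmem : ∀ f ∈ evenPolySet, φ (wD q p₀ p₁) f ∈ evenPolySet := by
    intro f hf
    rw [hw]
    simp only [LinearMap.sub_apply, LinearMap.neg_apply]
    exact even_sub (even_neg (phiMVW_mem q f hf)) (hvmem f hf)
  intro d
  obtain ⟨aa, rfl⟩ := RingQuot.mkAlgHom_surjective ℂ (DqRel q p₀ p₁) d
  induction aa using FreeAlgebra.induction with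
  | grade0 c =>
    intro f hf
    rw [AlgHom.commutes, AlgHom.commutes, Module.algebraMap_end_apply]
    exact even_smul c hf
  | grade1 i =>
    fin_cases i
    · intro f hf
      have hgoal : φ (uD q p₀ p₁) f ∈ evenPolySet := by rw [hu]; exact phiU_mem f hf
      exact hgoal
    · intro f hf
      exact hvmem f hf
    · intro f hf
      exact hwmem f hf
  | mul x y hx hy =>
    intro f hf
    rw [map_mul, map_mul, Module.End.mul_apply]
    exact hx _ (hy f hf)
  | add x y hx hy =>
    intro f hf
    rw [map_add, map_add, LinearMap.add_apply]
    exact even_add (hx f hf) (hy f hf)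
end
end

section
/- Every simple left D(q)-module V is either ℂ[u]-torsionfree (for every nonzero v ∈ V and every nonzero f ∈ ℂ[u], f·v ≠ 0), or is a generalized weight module with respect to ℂ[u], i.e. V = ⊕_{χ ∈ ℂ} V_χ where V_χ = {a ∈ V : (u−χ)ᵏ·a = 0 for some k ≥ 0}. -/
/-!
Let `W ⊆ V` be the sum of the generalized eigenspaces of `u`. The first two relations give
`u * s ∈ span (S ∪ S * u)` for `S = {1, u, v, w}`. So if `(u - χ)ᵏ x = 0`, the vectors
`(t * (u - χ)ʲ) • x` (`t ∈ S`, `j < k`) span a finite-dimensional `u`-stable subspace. Over `ℂ`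
such a subspace is a sum of generalized eigenspaces, so `t • x ∈ W`. Hence `W` is a
`D(q)`-submodule, and by simplicity `W = 0` or `W = V`. If `W = V`, then `V` is the direct sum of
its generalized weight spaces. If `W = 0`, then `u` has no eigenvectors, and since every
polynomial splits over `ℂ`, each nonzero polynomial in `u` acts injectively.
-/

noncomputable section

open Polynomial

namespace KleinD

open scoped Classical

/-- The generalized weight space `V_χ = {a ∈ V | (u-χ)ᵏ a = 0 for some k}`. -/
def genWeightSpace (q p₀ p₁ : ℂ[X]) (V : Type) [AddCommGroup V] [Module (Dq q p₀ p₁) V]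
    (χ : ℂ) : AddSubgroup V where
  carrier := {a | ∃ k : ℕ,
    ((uD q p₀ p₁ - algebraMap ℂ (Dq q p₀ p₁) χ) ^ k) • a = 0}
  zero_mem' := ⟨0, smul_zero _⟩
  add_mem' := by
    rintro v w ⟨k₁, h₁⟩ ⟨k₂, h₂⟩
    refine ⟨k₁ + k₂, ?_⟩
    have hv : ((uD q p₀ p₁ - algebraMap ℂ (Dq q p₀ p₁) χ) ^ (k₁ + k₂)) • v = 0 := by
      rw [add_comm, pow_add, mul_smul, h₁, smul_zero]
    have hw : ((uD q p₀ p₁ - algebraMap ℂ (Dq q p₀ p₁) χ) ^ (k₁ + k₂)) • w = 0 := by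
      rw [pow_add, mul_smul, h₂, smul_zero]
    rw [smul_add, hv, hw, add_zero]
  neg_mem' := by
    rintro v ⟨k, h⟩
    exact ⟨k, by rw [smul_neg, h, neg_zero]⟩

end KleinD

namespace Module.End

variable {K M : Type*} [Field K] [IsAlgClosed K] [AddCommGroup M] [Module K M]

theorem le_iSup_maxGenEigenspace_of_mapsTo (f : End K M) {p : Submodule K M}
    [FiniteDimensional K p] (hp : ∀ x ∈ p, f x ∈ p) : p ≤ ⨆ μ, f.maxGenEigenspace μ :=
  calc p = (⨆ μ, maxGenEigenspace (f.restrict hp) μ).map p.subtype := by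
        rw [iSup_maxGenEigenspace_eq_top, Submodule.map_subtype_top]
    _ = ⨆ μ, (maxGenEigenspace (f.restrict hp) μ).map p.subtype := Submodule.map_iSup _ _
    _ ≤ ⨆ μ, f.maxGenEigenspace μ := iSup_mono fun μ => by
        rw [maxGenEigenspace, genEigenspace_restrict]
        exact Submodule.map_comap_le _ _

theorem injective_aeval_of_forall_eigenspace_eq_bot {f : End K M}
    (hf : ∀ μ, f.eigenspace μ = ⊥) {g : K[X]} (hg : g ≠ 0) :
    Function.Injective (aeval f g) := by
  induction hn : g.natDegree generalizing g with
  | zero =>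
    obtain ⟨c, rfl⟩ := natDegree_eq_zero.mp hn
    have hc : c ≠ 0 := by rintro rfl; exact hg C_0
    rw [aeval_C, Module.algebraMap_end_eq_smul_id]
    exact smul_right_injective M hc
  | succ n ih =>
    obtain ⟨r, hr⟩ := IsAlgClosed.exists_root g (natDegree_pos_iff_degree_pos.mp (by omega)).ne'
    obtain ⟨g', rfl⟩ := dvd_iff_isRoot.mpr hr
    have hg' : g' ≠ 0 := right_ne_zero_of_mul hg
    have hdeg : g'.natDegree = n := by
      rw [natDegree_mul (X_sub_C_ne_zero r) hg', natDegree_X_sub_C] at hn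
      omega
    have hinj : Function.Injective (f - r • (1 : End K M)) := by
      rw [← LinearMap.ker_eq_bot, ← eigenspace_def, hf]
    rw [map_mul, map_sub, aeval_X, aeval_C, Algebra.algebraMap_eq_smul_one, Module.End.coe_mul]
    exact hinj.comp (ih hg' hdeg)

end Module.End

theorem Submodule.smul_mem_of_adjoin_eq_top {K A M : Type*} [CommSemiring K] [Semiring A]
    [Algebra K A] [AddCommMonoid M] [Module A M] [Module K M] [IsScalarTower K A M]
    {G : Set A} (hG : Algebra.adjoin K G = ⊤) (N : Submodule K M)
    (hN : ∀ g ∈ G, ∀ x ∈ N, g • x ∈ N) (a : A) {x : M} (hx : x ∈ N) : a • x ∈ N := by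
  have ha : a ∈ Algebra.adjoin K G := hG ▸ Algebra.mem_top
  induction ha using Algebra.adjoin_induction generalizing x with
  | mem g hg => exact hN g hg x hx
  | algebraMap c => rw [algebraMap_smul]; exact N.smul_mem c hx
  | add a b _ _ ha hb => rw [add_smul]; exact N.add_mem (ha hx) (hb hx)
  | mul a b _ _ ha hb => rw [mul_smul]; exact ha (hb hx)

open scoped Pointwise

section MulPowSpan

variable {K A M : Type*} [CommSemiring K] [Semiring A] [AddCommMonoid M] [Module A M] [Module K M]

variable (K) in
def mulPowSpan (S : Set A) (d : A) (k : ℕ) (x : M) : Submodule K M :=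
  Submodule.span K ((fun p : A × ℕ => (p.1 * d ^ p.2) • x) '' (S ×ˢ Set.Iio k))

theorem finite_mulPowSpan {S : Set A} (hS : S.Finite) (d : A) (k : ℕ) (x : M) :
    Module.Finite K (mulPowSpan K S d k x) :=
  Module.Finite.span_of_finite K ((hS.prod (Set.finite_Iio k)).image _)

theorem mul_pow_smul_mem_mulPowSpan {S : Set A} {d : A} {k : ℕ} {x : M} (hk : d ^ k • x = 0)
    {t : A} (ht : t ∈ S) (j : ℕ) : (t * d ^ j) • x ∈ mulPowSpan K S d k x := by
  rcases lt_or_ge j k with hj | hj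
  · exact Submodule.subset_span ⟨(t, j), ⟨ht, hj⟩, rfl⟩
  · rw [← Nat.sub_add_cancel hj, pow_add, ← mul_assoc, mul_smul, hk, smul_zero]
    exact Submodule.zero_mem _

variable [Algebra K A] [IsScalarTower K A M]

theorem smul_mem_mulPowSpan {S : Set A} {d : A}
    (hd : ∀ s ∈ S, d * s ∈ Submodule.span K (S ∪ S * {d})) {k : ℕ} {x : M}
    (hk : d ^ k • x = 0) {y : M} (hy : y ∈ mulPowSpan K S d k x) :
    d • y ∈ mulPowSpan K S d k x := by
  have hspan : ∀ a ∈ Submodule.span K (S ∪ S * {d}), ∀ j,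
      (a * d ^ j) • x ∈ mulPowSpan K S d k x := by
    intro a ha j
    induction ha using Submodule.span_induction with
    | mem a ha =>
      rcases ha with ha | ⟨t, ht, _, rfl, rfl⟩
      · exact mul_pow_smul_mem_mulPowSpan hk ha j
      · rw [mul_assoc, ← pow_succ']
        exact mul_pow_smul_mem_mulPowSpan hk ht (j + 1)
    | zero => rw [zero_mul, zero_smul]; exact Submodule.zero_mem _
    | add a b _ _ ha hb => rw [add_mul, add_smul]; exact Submodule.add_mem _ ha hb
    | smul c a _ ha => rw [smul_mul_assoc, smul_assoc]; exact Submodule.smul_mem _ c ha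
  induction hy using Submodule.span_induction with
  | mem y hy =>
    obtain ⟨⟨t, j⟩, ⟨ht, _⟩, rfl⟩ := hy
    rw [← mul_smul, ← mul_assoc]
    exact hspan _ (hd t ht) j
  | zero => rw [smul_zero]; exact Submodule.zero_mem _
  | add y z _ _ hy hz => rw [smul_add]; exact Submodule.add_mem _ hy hz
  | smul c y _ hy => rw [smul_comm]; exact Submodule.smul_mem _ c hy

end MulPowSpan

section Ring

variable {K A M : Type*} [CommRing K] [Ring A] [Algebra K A]

theorem mul_mem_span_union_mul_sub_algebraMap {u s : A} {S : Set A} (hs : s ∈ S)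
    (h : u * s ∈ Submodule.span K (S ∪ S * {u})) (c : K) :
    (u - algebraMap K A c) * s ∈ Submodule.span K (S ∪ S * {u - algebraMap K A c}) := by
  have hle : Submodule.span K (S ∪ S * {u}) ≤
      Submodule.span K (S ∪ S * {u - algebraMap K A c}) := by
    rw [Submodule.span_le, Set.mul_singleton]
    rintro _ (ht | ⟨t, ht, rfl⟩)
    · exact Submodule.subset_span (Or.inl ht)
    · have : t * u = t * (u - algebraMap K A c) + c • t := by
        rw [mul_sub, ← Algebra.commutes, ← Algebra.smul_def, sub_add_cancel]
      change t * u ∈ Submodule.span K _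
      rw [this]
      exact add_mem (Submodule.subset_span (Or.inr (Set.mul_mem_mul ht rfl)))
        (Submodule.smul_mem _ c (Submodule.subset_span (Or.inl ht)))
  rw [sub_mul, ← Algebra.smul_def]
  exact sub_mem (hle h) (Submodule.smul_mem _ c (Submodule.subset_span (Or.inl hs)))

theorem mem_maxGenEigenspace_lsmul_iff [AddCommGroup M] [Module A M] [Module K M]
    [IsScalarTower K A M] {u : A} {χ : K} {x : M} :
    x ∈ (Algebra.lsmul K K M u).maxGenEigenspace χ ↔
      ∃ k : ℕ, (u - algebraMap K A χ) ^ k • x = 0 := by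
  rw [Module.End.mem_maxGenEigenspace, ← Algebra.algebraMap_eq_smul_one,
    ← AlgHom.commutes (Algebra.lsmul K K (A := A) M) χ, ← map_sub]
  simp only [← map_pow, Algebra.lsmul_apply]

end Ring

section IsAlgClosed

variable {K A M : Type*} [Field K] [IsAlgClosed K] [Ring A] [Algebra K A]
  [AddCommGroup M] [Module A M] [Module K M] [IsScalarTower K A M]

theorem smul_mem_iSup_maxGenEigenspace_of_mem_maxGenEigenspace {u : A} {S : Set A}
    (hS_fin : S.Finite) (hS : ∀ s ∈ S, u * s ∈ Submodule.span K (S ∪ S * {u}))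
    {s : A} (hs : s ∈ S) {χ : K} {x : M}
    (hx : x ∈ (Algebra.lsmul K K M u).maxGenEigenspace χ) :
    s • x ∈ ⨆ μ, (Algebra.lsmul K K M u).maxGenEigenspace μ := by
  set d := u - algebraMap K A χ
  have hd : ∀ s ∈ S, d * s ∈ Submodule.span K (S ∪ S * {d}) := fun s hs =>
    mul_mem_span_union_mul_sub_algebraMap hs (hS s hs) χ
  obtain ⟨k, hk⟩ := mem_maxGenEigenspace_lsmul_iff.mp hx
  have := finite_mulPowSpan (K := K) hS_fin d k x
  have hu : ∀ y ∈ mulPowSpan K S d k x, Algebra.lsmul K K M u y ∈ mulPowSpan K S d k x :=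
    fun y hy => by
      rw [Algebra.lsmul_apply, ← sub_add_cancel u (algebraMap K A χ), add_smul, algebraMap_smul]
      exact add_mem (smul_mem_mulPowSpan hd hk hy) (Submodule.smul_mem _ χ hy)
  have hsx : s • x ∈ mulPowSpan K S d k x := by
    simpa using mul_pow_smul_mem_mulPowSpan hk hs 0
  exact Module.End.le_iSup_maxGenEigenspace_of_mapsTo _ hu hsx

theorem smul_mem_iSup_maxGenEigenspace {u : A} {S : Set A}
    (hS_fin : S.Finite) (hS : ∀ s ∈ S, u * s ∈ Submodule.span K (S ∪ S * {u}))
    {s : A} (hs : s ∈ S) {x : M} (hx : x ∈ ⨆ μ, (Algebra.lsmul K K M u).maxGenEigenspace μ) :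
    s • x ∈ ⨆ μ, (Algebra.lsmul K K M u).maxGenEigenspace μ :=
  Submodule.iSup_induction _ (motive := fun y => s • y ∈ _) hx
    (fun _ _ hy => smul_mem_iSup_maxGenEigenspace_of_mem_maxGenEigenspace hS_fin hS hs hy)
    (by rw [smul_zero]; exact Submodule.zero_mem _)
    (fun y z hy hz => by rw [smul_add]; exact Submodule.add_mem _ hy hz)

theorem smul_ne_zero_of_iSup_maxGenEigenspace_eq_bot {u : A}
    (h : ⨆ μ, (Algebra.lsmul K K M u).maxGenEigenspace μ = ⊥)
    {x : M} (hx : x ≠ 0) {f : A} (hf : f ∈ Algebra.adjoin K {u}) (hf0 : f ≠ 0) : f • x ≠ 0 := by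
  rw [Algebra.adjoin_singleton_eq_range_aeval] at hf
  obtain ⟨g, rfl⟩ := hf
  have hg : g ≠ 0 := by rintro rfl; exact hf0 (map_zero _)
  have heig : ∀ μ, (Algebra.lsmul K K M u).eigenspace μ = ⊥ := fun μ =>
    eq_bot_iff.mpr (Module.End.eigenspace_le_maxGenEigenspace.trans (h ▸ le_iSup _ μ))
  rw [AlgHom.toRingHom_eq_coe, RingHom.coe_coe, ← Algebra.lsmul_apply K K,
    ← Polynomial.aeval_algHom_apply]
  exact (Module.End.injective_aeval_of_forall_eigenspace_eq_bot heig hg).ne_iff' (map_zero _)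
    |>.mpr hx

end IsAlgClosed

namespace KleinD

variable {q p₀ p₁ : ℂ[X]}

theorem uD_mul_vD :
    uD q p₀ p₁ * vD q p₀ p₁ = vD q p₀ p₁ * uD q p₀ p₁ + 2 * wD q p₀ p₁ + vD q p₀ p₁ := by
  have h := RingQuot.mkAlgHom_rel ℂ (DqRel.rel1 (q := q) (p₀ := p₀) (p₁ := p₁))
  simp only [map_sub, map_mul, map_add, map_ofNat] at h
  rw [uD, vD, wD, sub_eq_iff_eq_add'.mp h]
  abel

theorem uD_mul_wD : uD q p₀ p₁ * wD q p₀ p₁ = wD q p₀ p₁ * uD q p₀ p₁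
    + 2 * vD q p₀ p₁ * uD q p₀ p₁ + wD q p₀ p₁ + algebraMap ℂ (Dq q p₀ p₁) (rho q) := by
  have h := RingQuot.mkAlgHom_rel ℂ (DqRel.rel2 (q := q) (p₀ := p₀) (p₁ := p₁))
  simp only [map_sub, map_mul, map_add, map_ofNat, AlgHom.commutes] at h
  rw [uD, vD, wD, sub_eq_iff_eq_add'.mp h]
  abel

variable (q p₀ p₁) in
abbrev generatorsWithOne : Set (Dq q p₀ p₁) := {1, uD q p₀ p₁, vD q p₀ p₁, wD q p₀ p₁}

theorem adjoin_generatorsWithOne : Algebra.adjoin ℂ (generatorsWithOne q p₀ p₁) = ⊤ := by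
  refine Algebra.eq_top_iff.mpr fun a => ?_
  obtain ⟨a, rfl⟩ := RingQuot.mkAlgHom_surjective ℂ (DqRel q p₀ p₁) a
  induction a using FreeAlgebra.induction with
  | grade0 c => rw [AlgHom.commutes]; exact Subalgebra.algebraMap_mem _ c
  | grade1 i =>
    apply Algebra.subset_adjoin
    fin_cases i <;> simp [generatorsWithOne, uD, vD, wD, U, V, W]
  | mul a b ha hb => rw [map_mul]; exact mul_mem ha hb
  | add a b ha hb => rw [map_add]; exact add_mem ha hb

theorem uD_mul_mem_span_generatorsWithOne {s : Dq q p₀ p₁}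
    (hs : s ∈ generatorsWithOne q p₀ p₁) :
    uD q p₀ p₁ * s ∈ Submodule.span ℂ
      (generatorsWithOne q p₀ p₁ ∪ generatorsWithOne q p₀ p₁ * {uD q p₀ p₁}) := by
  set S := generatorsWithOne q p₀ p₁
  have hS : ∀ t ∈ S, t ∈ Submodule.span ℂ (S ∪ S * {uD q p₀ p₁}) := fun t ht =>
    Submodule.subset_span (Or.inl ht)
  have hSu : ∀ t ∈ S, t * uD q p₀ p₁ ∈ Submodule.span ℂ (S ∪ S * {uD q p₀ p₁}) := fun t ht =>
    Submodule.subset_span (Or.inr (Set.mul_mem_mul ht rfl))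
  obtain ⟨h1, hu, hv, hw⟩ : 1 ∈ S ∧ uD q p₀ p₁ ∈ S ∧ vD q p₀ p₁ ∈ S ∧ wD q p₀ p₁ ∈ S := by
    simp [S, generatorsWithOne]
  rcases hs with rfl | rfl | rfl | rfl
  · rw [mul_one]
    exact hS _ hu
  · exact hSu _ hu
  · rw [uD_mul_vD, two_mul]
    exact add_mem (add_mem (hSu _ hv) (add_mem (hS _ hw) (hS _ hw))) (hS _ hv)
  · rw [uD_mul_wD, two_mul, add_mul, Algebra.algebraMap_eq_smul_one]
    exact add_mem (add_mem (add_mem (hSu _ hw) (add_mem (hSu _ hv) (hSu _ hv))) (hS _ hw))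
      (Submodule.smul_mem _ _ (hS _ h1))

variable (V : Type) [AddCommGroup V] [Module (Dq q p₀ p₁) V] [Module ℂ V]
  [IsScalarTower ℂ (Dq q p₀ p₁) V]

theorem genWeightSpace_eq_maxGenEigenspace (χ : ℂ) : genWeightSpace q p₀ p₁ V χ =
    ((Algebra.lsmul ℂ ℂ V (uD q p₀ p₁)).maxGenEigenspace χ).toAddSubgroup := by
  ext a
  rw [Submodule.mem_toAddSubgroup, mem_maxGenEigenspace_lsmul_iff]
  rfl

theorem iSup_maxGenEigenspace_uD_eq_bot_or_eq_top [IsSimpleModule (Dq q p₀ p₁) V] :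
    ⨆ χ, (Algebra.lsmul ℂ ℂ V (uD q p₀ p₁)).maxGenEigenspace χ = ⊥ ∨
      ⨆ χ, (Algebra.lsmul ℂ ℂ V (uD q p₀ p₁)).maxGenEigenspace χ = ⊤ := by
  set W := ⨆ χ, (Algebra.lsmul ℂ ℂ V (uD q p₀ p₁)).maxGenEigenspace χ
  have hW : ∀ s ∈ generatorsWithOne q p₀ p₁, ∀ x ∈ W, s • x ∈ W := fun _ hs _ hx =>
    smul_mem_iSup_maxGenEigenspace (Set.toFinite _)
      (fun _ ht => uD_mul_mem_span_generatorsWithOne ht) hs hx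
  obtain ⟨N, hN⟩ : ∃ N : Submodule (Dq q p₀ p₁) V, N.restrictScalars ℂ = W :=
    ⟨{ W.toAddSubmonoid with
        smul_mem' := fun a _ hx => W.smul_mem_of_adjoin_eq_top adjoin_generatorsWithOne hW a hx },
      rfl⟩
  rw [← hN]
  rcases eq_bot_or_eq_top N with rfl | rfl
  · exact Or.inl (Submodule.restrictScalars_bot _ _ _)
  · exact Or.inr (Submodule.restrictScalars_top _ _ _)

end KleinD

open KleinD in
theorem statement6_general (q p₀ p₁ : Polynomial ℂ)
    (V : Type) [AddCommGroup V] [Module (Dq q p₀ p₁) V]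
    [IsSimpleModule (Dq q p₀ p₁) V] :
    (∀ v : V, v ≠ 0 → ∀ f ∈ Algebra.adjoin ℂ {uD q p₀ p₁}, f ≠ 0 → f • v ≠ 0)
    ∨ DirectSum.IsInternal (fun χ : ℂ => genWeightSpace q p₀ p₁ V χ) := by
  let : Module ℂ V := Module.compHom V (algebraMap ℂ (Dq q p₀ p₁))
  have : IsScalarTower ℂ (Dq q p₀ p₁) V := IsScalarTower.of_algebraMap_smul fun _ _ => rfl
  rcases iSup_maxGenEigenspace_uD_eq_bot_or_eq_top (q := q) (p₀ := p₀) (p₁ := p₁) V with h | h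
  · exact Or.inl fun x hx f hf hf0 => smul_ne_zero_of_iSup_maxGenEigenspace_eq_bot h hx hf hf0
  · right
    simp_rw [genWeightSpace_eq_maxGenEigenspace]
    exact DirectSum.isInternal_submodule_of_iSupIndep_of_iSup_eq_top
      (Module.End.independent_maxGenEigenspace _) h

open KleinD in
/-- Every simple left `D(q)`-module `V` is either `ℂ[u]`-torsionfree, or a
generalized weight module with respect to `ℂ[u]`: `V = ⊕_{χ ∈ ℂ} V_χ` where
`V_χ = {a ∈ V | (u-χ)ᵏ a = 0 for some k}`. -/
theorem statement6 (q p₀ p₁ : Polynomial ℂ) (hq : 4 ≤ q.natDegree)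
    (hp : pCond q p₀ p₁)
    (V : Type) [AddCommGroup V] [Module (Dq q p₀ p₁) V]
    [IsSimpleModule (Dq q p₀ p₁) V] :
    (∀ v : V, v ≠ 0 → ∀ f ∈ Algebra.adjoin ℂ {uD q p₀ p₁}, f ≠ 0 → f • v ≠ 0)
    ∨ DirectSum.IsInternal (fun χ : ℂ => genWeightSpace q p₀ p₁ V χ) :=
  statement6_general q p₀ p₁ V
end
end

section
/- There exists a ℂ-algebra anti-automorphism * of D(q) (a ℂ-linear bijection with (XY)* = Y*X* and 1* = 1) satisfying u* = u, v* = v, and w* = −w − v. -/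
noncomputable section

open Polynomial

namespace KleinD

open MulOpposite

lemma aeval_op {A : Type*} [Ring A] [Algebra ℂ A] (x : A) (p : ℂ[X]) :
    Polynomial.aeval (MulOpposite.op x) p = MulOpposite.op (Polynomial.aeval x p) := by
  induction p using Polynomial.induction_on' with
  | add p q hp hq => simp [hp, hq]
  | monomial n c =>
    simp [Polynomial.aeval_monomial, MulOpposite.algebraMap_apply,
      ← MulOpposite.op_pow, ← MulOpposite.op_mul, Algebra.commutes]


section AntiRel
variable {A : Type*} [Ring A]

lemma c1 (u v w : A) (h1 : u*v - v*u = 2*w + v) :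
    v*u - u*v = (-w - v) * 2 + v := by
  have key : (v*u - u*v) - ((-w - v) * 2 + v) = -((u*v - v*u) - (2*w + v)) := by noncomm_ring
  rw [h1] at key
  simp only [sub_self, neg_zero] at key
  exact sub_eq_zero.mp key

lemma c2 (u v w r : A) (h1 : u*v - v*u = 2*w + v) (h2 : u*w - w*u = 2*v*u + w + r) :
    (-w - v)*u - u*(-w - v) = u*(v*2) + (-w - v) + r := by
  have key : ((-w - v)*u - u*(-w - v)) - (u*(v*2) + (-w - v) + r)
      = ((u*w - w*u) - (2*v*u + w + r)) - ((u*v - v*u) - (2*w + v)) := by noncomm_ring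
  rw [h1, h2] at key
  simp only [sub_self, sub_zero, zero_sub, neg_zero] at key
  exact sub_eq_zero.mp key

lemma c3 (v w P1 : A) (h3 : v*w - w*v = -(v*v) - P1) :
    (-w - v)*v - v*(-w - v) = -(v*v) - P1 := by
  have key : ((-w - v)*v - v*(-w - v)) - (-(v*v) - P1)
      = (v*w - w*v) - (-(v*v) - P1) := by noncomm_ring
  rw [h3] at key
  simp only [sub_self] at key
  exact sub_eq_zero.mp key

lemma c4 (u v w r P0 : A) (h1 : u*v - v*u = 2*w + v) (hr : r*v = v*r)
    (h4 : w*w = v*v*u + v*w + r*v + P0) :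
    (-w - v)*(-w - v) = u*(v*v) + (-w - v)*v + v*r + P0 := by
  have key : ((-w - v)*(-w - v)) - (u*(v*v) + (-w - v)*v + v*r + P0)
      = (w*w - (v*v*u + v*w + r*v + P0))
        - (((u*v - v*u) - (2*w + v))*v + v*((u*v - v*u) - (2*w + v)))
        + (r*v - v*r) := by noncomm_ring
  rw [h4, h1, hr] at key
  simp only [sub_self, zero_mul, mul_zero, add_zero, zero_add, sub_zero, neg_zero] at key
  exact sub_eq_zero.mp key

end AntiRel

variable (q p₀ p₁ : ℂ[X])

lemma mk_aeval (p : ℂ[X]) :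
    RingQuot.mkAlgHom ℂ (DqRel q p₀ p₁) (Polynomial.aeval U p)
      = Polynomial.aeval (uD q p₀ p₁) p :=
  (Polynomial.aeval_algHom_apply (RingQuot.mkAlgHom ℂ (DqRel q p₀ p₁)) U p).symm

lemma drel1 : uD q p₀ p₁ * vD q p₀ p₁ - vD q p₀ p₁ * uD q p₀ p₁
    = 2 * wD q p₀ p₁ + vD q p₀ p₁ := by
  have h := RingQuot.mkAlgHom_rel ℂ (DqRel.rel1 (q := q) (p₀ := p₀) (p₁ := p₁))
  simpa [uD, vD, wD, map_ofNat] using h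

lemma drel2 : uD q p₀ p₁ * wD q p₀ p₁ - wD q p₀ p₁ * uD q p₀ p₁
    = 2 * vD q p₀ p₁ * uD q p₀ p₁ + wD q p₀ p₁
      + algebraMap ℂ (Dq q p₀ p₁) (rho q) := by
  have h := RingQuot.mkAlgHom_rel ℂ (DqRel.rel2 (q := q) (p₀ := p₀) (p₁ := p₁))
  simpa [uD, vD, wD, map_ofNat] using h

lemma drel3 : vD q p₀ p₁ * wD q p₀ p₁ - wD q p₀ p₁ * vD q p₀ p₁
    = -(vD q p₀ p₁ * vD q p₀ p₁) - Polynomial.aeval (uD q p₀ p₁) p₁ := by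
  have h := RingQuot.mkAlgHom_rel ℂ (DqRel.rel3 (q := q) (p₀ := p₀) (p₁ := p₁))
  simpa [uD, vD, wD, mk_aeval, map_ofNat] using h

lemma drel4 : wD q p₀ p₁ * wD q p₀ p₁
    = vD q p₀ p₁ * vD q p₀ p₁ * uD q p₀ p₁ + vD q p₀ p₁ * wD q p₀ p₁
      + algebraMap ℂ (Dq q p₀ p₁) (rho q) * vD q p₀ p₁
      + Polynomial.aeval (uD q p₀ p₁) p₀ := by
  have h := RingQuot.mkAlgHom_rel ℂ (DqRel.rel4 (q := q) (p₀ := p₀) (p₁ := p₁))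
  simpa [uD, vD, wD, mk_aeval, map_ofNat] using h

def fA : FreeAlgebra ℂ (Fin 3) →ₐ[ℂ] (Dq q p₀ p₁)ᵐᵒᵖ :=
  FreeAlgebra.lift ℂ
    ![op (uD q p₀ p₁), op (vD q p₀ p₁), op (-wD q p₀ p₁ - vD q p₀ p₁)]

lemma fA_U : fA q p₀ p₁ U = op (uD q p₀ p₁) := by simp [fA, U]
lemma fA_V : fA q p₀ p₁ V = op (vD q p₀ p₁) := by simp [fA, V]
lemma fA_W : fA q p₀ p₁ W = op (-wD q p₀ p₁ - vD q p₀ p₁) := by simp [fA, W]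

lemma fA_aeval (p : ℂ[X]) :
    fA q p₀ p₁ (Polynomial.aeval U p) = op (Polynomial.aeval (uD q p₀ p₁) p) := by
  rw [← Polynomial.aeval_algHom_apply, fA_U, aeval_op]

lemma fA_rel : ∀ ⦃a b⦄, DqRel q p₀ p₁ a b → fA q p₀ p₁ a = fA q p₀ p₁ b := by
  intro a b h
  induction h with
  | rel1 =>
    apply unop_injective
    simp only [map_sub, map_add, map_mul, map_ofNat, fA_U, fA_V, fA_W,
      unop_sub, unop_add, unop_mul, unop_op, unop_ofNat]
    exact c1 _ _ _ (drel1 q p₀ p₁)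
  | rel2 =>
    apply unop_injective
    simp only [map_sub, map_add, map_mul, map_ofNat, fA_U, fA_V, fA_W,
      AlgHom.commutes, MulOpposite.algebraMap_apply,
      unop_sub, unop_add, unop_mul, unop_op, unop_ofNat]
    exact c2 _ _ _ _ (drel1 q p₀ p₁) (drel2 q p₀ p₁)
  | rel3 =>
    apply unop_injective
    simp only [map_sub, map_add, map_mul, map_neg, fA_U, fA_V, fA_W, fA_aeval,
      unop_sub, unop_add, unop_mul, unop_neg, unop_op]
    exact c3 _ _ _ (drel3 q p₀ p₁)
  | rel4 =>
    apply unop_injective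
    simp only [map_sub, map_add, map_mul, fA_U, fA_V, fA_W, fA_aeval,
      AlgHom.commutes, MulOpposite.algebraMap_apply,
      unop_sub, unop_add, unop_mul, unop_op]
    exact c4 _ _ _ _ _ (drel1 q p₀ p₁) (Algebra.commutes (rho q) (vD q p₀ p₁))
      (drel4 q p₀ p₁)

def psi : Dq q p₀ p₁ →ₐ[ℂ] (Dq q p₀ p₁)ᵐᵒᵖ :=
  RingQuot.liftAlgHom ℂ ⟨fA q p₀ p₁, fA_rel q p₀ p₁⟩

lemma psi_u : psi q p₀ p₁ (uD q p₀ p₁) = op (uD q p₀ p₁) := by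
  rw [uD, psi, RingQuot.liftAlgHom_mkAlgHom_apply, fA_U]; rfl

lemma psi_v : psi q p₀ p₁ (vD q p₀ p₁) = op (vD q p₀ p₁) := by
  rw [vD, psi, RingQuot.liftAlgHom_mkAlgHom_apply, fA_V]; rfl

lemma psi_w : psi q p₀ p₁ (wD q p₀ p₁) = op (-wD q p₀ p₁ - vD q p₀ p₁) := by
  rw [wD, psi, RingQuot.liftAlgHom_mkAlgHom_apply, fA_W]
  rw [wD]

def phi : (Dq q p₀ p₁)ᵐᵒᵖ →ₐ[ℂ] Dq q p₀ p₁ :=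
  ((AlgEquiv.opOp ℂ (Dq q p₀ p₁)).symm.toAlgHom).comp (AlgHom.op (psi q p₀ p₁))

lemma phi_apply (x : (Dq q p₀ p₁)ᵐᵒᵖ) :
    phi q p₀ p₁ x = unop (psi q p₀ p₁ (unop x)) := rfl

lemma phi_psi : (phi q p₀ p₁).comp (psi q p₀ p₁) = AlgHom.id ℂ (Dq q p₀ p₁) := by
  apply RingQuot.ringQuot_ext'
  apply FreeAlgebra.hom_ext
  funext i
  simp only [Function.comp_apply, AlgHom.coe_comp, AlgHom.coe_id, id_eq, phi_apply]
  fin_cases i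
  · show unop (psi q p₀ p₁ (unop (psi q p₀ p₁ (uD q p₀ p₁)))) = uD q p₀ p₁
    rw [psi_u, unop_op, psi_u, unop_op]
  · show unop (psi q p₀ p₁ (unop (psi q p₀ p₁ (vD q p₀ p₁)))) = vD q p₀ p₁
    rw [psi_v, unop_op, psi_v, unop_op]
  · show unop (psi q p₀ p₁ (unop (psi q p₀ p₁ (wD q p₀ p₁)))) = wD q p₀ p₁
    rw [psi_w, unop_op, map_sub, map_neg, psi_w, psi_v]
    simp only [unop_sub, unop_neg, unop_op]
    noncomm_ring

def sigLin : Dq q p₀ p₁ →ₗ[ℂ] Dq q p₀ p₁ :=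
  (MulOpposite.opLinearEquiv ℂ).symm.toLinearMap ∘ₗ (psi q p₀ p₁).toLinearMap

lemma sigLin_apply (x : Dq q p₀ p₁) :
    sigLin q p₀ p₁ x = unop (psi q p₀ p₁ x) := rfl

lemma sigLin_sq : (sigLin q p₀ p₁).comp (sigLin q p₀ p₁) = LinearMap.id := by
  ext x
  have h := DFunLike.congr_fun (phi_psi q p₀ p₁) x
  simpa [phi_apply, sigLin_apply] using h


end KleinD

open KleinD in
/-- There is a ℂ-algebra anti-automorphism `*` of `D(q)` (a ℂ-linear
bijection with `(XY)* = Y*X*` and `1* = 1`) with `u* = u`, `v* = v`, `w* = -w - v`. -/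
theorem statement11 (q p₀ p₁ : Polynomial ℂ) (hq : 4 ≤ q.natDegree)
    (hp : pCond q p₀ p₁) :
    ∃ σ : Dq q p₀ p₁ ≃ₗ[ℂ] Dq q p₀ p₁,
      (∀ a b : Dq q p₀ p₁, σ (a * b) = σ b * σ a) ∧
      σ 1 = 1 ∧
      σ (uD q p₀ p₁) = uD q p₀ p₁ ∧
      σ (vD q p₀ p₁) = vD q p₀ p₁ ∧
      σ (wD q p₀ p₁) = -wD q p₀ p₁ - vD q p₀ p₁ := by
  refine ⟨LinearEquiv.ofLinear (sigLin q p₀ p₁) (sigLin q p₀ p₁)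
    (sigLin_sq q p₀ p₁) (sigLin_sq q p₀ p₁), ?_, ?_, ?_, ?_, ?_⟩
  · intro a b
    simp only [LinearEquiv.ofLinear_apply, sigLin_apply, map_mul, MulOpposite.unop_mul]
  · simp only [LinearEquiv.ofLinear_apply, sigLin_apply, map_one, MulOpposite.unop_one]
  · simp only [LinearEquiv.ofLinear_apply, sigLin_apply, psi_u, MulOpposite.unop_op]
  · simp only [LinearEquiv.ofLinear_apply, sigLin_apply, psi_v, MulOpposite.unop_op]
  · simp only [LinearEquiv.ofLinear_apply, sigLin_apply, psi_w, MulOpposite.unop_op]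
end
end

section
/- ℂ[u] is a Harish-Chandra subalgebra of D(q): for every a ∈ D(q), the subspace ℂ[u]·a·ℂ[u] of D(q) is finitely generated both as a left ℂ[u]-module and as a right ℂ[u]-module. -/
noncomputable section

open Polynomial

namespace KleinD

variable {A : Type} [Ring A] [Algebra ℂ A]

/-- The set `Γ·a·Γ` of finite sums `Σ γᵢ a γᵢ'` with `γᵢ, γᵢ' ∈ Γ` (as `ℂ ⊆ Γ`, this is
the ℂ-span of the products `γ a γ'`). -/
def biSpan (Γ : Subalgebra ℂ A) (a : A) : Set A :=
  (Submodule.span ℂ {y : A | ∃ g₁ ∈ Γ, ∃ g₂ ∈ Γ, y = g₁ * a * g₂} : Set A)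

/-- The left `Γ`-submodule of `A` generated by a set `s`: finite sums `Σ γᵢ xᵢ`. -/
def leftSpan (Γ : Subalgebra ℂ A) (s : Set A) : Set A :=
  (Submodule.span ℂ {y : A | ∃ g ∈ Γ, ∃ x ∈ s, y = g * x} : Set A)

/-- The right `Γ`-submodule of `A` generated by a set `s`: finite sums `Σ xᵢ γᵢ`. -/
def rightSpan (Γ : Subalgebra ℂ A) (s : Set A) : Set A :=
  (Submodule.span ℂ {y : A | ∃ g ∈ Γ, ∃ x ∈ s, y = x * g} : Set A)

/-- `Γ` is a Harish-Chandra subalgebra of `A` if, for every `a ∈ A`, the `Γ`-bimodule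
`Γ·a·Γ` is finitely generated as a left `Γ`-module and as a right `Γ`-module. -/
def IsHarishChandraSubalgebra (Γ : Subalgebra ℂ A) : Prop :=
  ∀ a : A,
    (∃ S : Finset A, ↑S ⊆ biSpan Γ a ∧ biSpan Γ a = leftSpan Γ ↑S) ∧
    (∃ S : Finset A, ↑S ⊆ biSpan Γ a ∧ biSpan Γ a = rightSpan Γ ↑S)

end KleinD

/-!
Let `Γ = ℂ[u]` and `P = span {1, v, w}`. The relations `[u, v] = 2w + v` and
`[u, w] = 2vu + w + ρ` give `P·u ⊆ Γ·P`, hence `Pⁿ·Γ ⊆ Γ·Pⁿ`, so the left `Γ`-modules `Γ·Pⁿ`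
form an exhaustive filtration of the algebra by subspaces that are closed under right
multiplication by `Γ` and finitely generated as left `Γ`-modules. If `a ∈ Γ·Pⁿ`, then
`Γ·a·Γ ⊆ Γ·Pⁿ`, which is finitely generated over the Noetherian ring `Γ`, a quotient of `ℂ[X]`;
so `Γ·a·Γ` is finitely generated as a left `Γ`-module. The same relations give `u·P ⊆ P·Γ`,
and the right-hand statement is the left-hand one in the opposite algebra.
-/

namespace KleinD

open Submodule Subalgebra Algebra MulOpposite

section Filtration

variable {R A : Type*} [CommSemiring R] [Semiring A] [Algebra R A]

theorem pow_mul_le_mul_pow {P Q : Submodule R A} (h : P * Q ≤ Q * P) :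
    ∀ n : ℕ, P ^ n * Q ≤ Q * P ^ n
  | 0 => by simp
  | n + 1 => calc
      P ^ (n + 1) * Q = P ^ n * (P * Q) := by rw [pow_succ, mul_assoc]
      _ ≤ P ^ n * (Q * P) := mul_le_mul_right h _
      _ = P ^ n * Q * P := (mul_assoc _ _ _).symm
      _ ≤ Q * P ^ n * P := mul_le_mul_left (pow_mul_le_mul_pow h n) _
      _ = Q * P ^ (n + 1) := by rw [pow_succ, mul_assoc]

theorem toSubmodule_mul_self_le (B : Subalgebra R A) :
    toSubmodule B * toSubmodule B ≤ toSubmodule B :=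
  mul_le.2 fun _ hx _ hy => B.mul_mem hx hy

theorem le_toSubmodule_mul (B : Subalgebra R A) (P : Submodule R A) :
    P ≤ toSubmodule B * P :=
  fun p hp => one_mul p ▸ mul_mem_mul B.one_mem hp

theorem le_mul_toSubmodule (B : Subalgebra R A) (P : Submodule R A) :
    P ≤ P * toSubmodule B :=
  fun p hp => mul_one p ▸ mul_mem_mul hp B.one_mem

theorem mul_toSubmodule_adjoin_le {s : Set A} {P : Submodule R A}
    (h : P * span R s ≤ toSubmodule (adjoin R s) * P) :
    P * toSubmodule (adjoin R s) ≤ toSubmodule (adjoin R s) * P := by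
  set B := toSubmodule (adjoin R s)
  suffices ∀ x ∈ adjoin R s, ∀ p ∈ P, p * x ∈ B * P from
    mul_le.2 fun p hp x hx => this x hx p hp
  intro x hx
  induction hx using Algebra.adjoin_induction with
  | mem x hx => exact fun p hp => h (mul_mem_mul hp (subset_span hx))
  | algebraMap r =>
    intro p hp
    rw [← Algebra.commutes, ← Algebra.smul_def]
    exact Submodule.smul_mem _ r (le_toSubmodule_mul _ P hp)
  | add x y _ _ hx hy => exact fun p hp => mul_add p x y ▸ add_mem (hx p hp) (hy p hp)
  | mul x y _ _ hx hy =>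
    intro p hp
    rw [← mul_assoc]
    refine Submodule.mul_induction_on (C := fun z => z * y ∈ B * P) (hx p hp)
      (fun g hg q hq => ?_) (fun _ _ h₁ h₂ => (add_mul _ _ y).symm ▸ add_mem h₁ h₂)
    have hgqy : g * (q * y) ∈ B * B * P := mul_assoc B B P ▸ mul_mem_mul hg (hy q hq)
    exact mul_assoc g q y ▸ mul_le_mul_left (toSubmodule_mul_self_le _) _ hgqy

theorem exists_mem_toSubmodule_adjoin_mul_pow {s : Set A} {P : Submodule R A}
    (hcomm : P * toSubmodule (adjoin R s) ≤ toSubmodule (adjoin R s) * P) (h1 : 1 ∈ P)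
    {x : A} (hx : x ∈ adjoin R (s ∪ P)) : ∃ n, x ∈ toSubmodule (adjoin R s) * P ^ n := by
  set B := toSubmodule (adjoin R s)
  have mono : Monotone fun n => B * P ^ n := fun n m hnm =>
    mul_le_mul_right (pow_le_pow_right' (one_le.2 h1) hnm) B
  have base {x : A} (hx : x ∈ adjoin R s) : x ∈ B * P ^ 0 := by simpa [B] using hx
  induction hx using Algebra.adjoin_induction with
  | mem x hx =>
    rcases hx with hx | hx
    · exact ⟨0, base (subset_adjoin hx)⟩
    · exact ⟨1, by simpa using le_toSubmodule_mul _ P hx⟩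
  | algebraMap r => exact ⟨0, base (algebraMap_mem _ r)⟩
  | add x y _ _ hx hy =>
    obtain ⟨n, hn⟩ := hx
    obtain ⟨m, hm⟩ := hy
    exact ⟨max n m, add_mem (mono (le_max_left n m) hn) (mono (le_max_right n m) hm)⟩
  | mul x y _ _ hx hy =>
    obtain ⟨n, hn⟩ := hx
    obtain ⟨m, hm⟩ := hy
    refine ⟨n + m, ?_⟩
    have : B * P ^ n * (B * P ^ m) ≤ B * P ^ (n + m) := calc
      B * P ^ n * (B * P ^ m) = B * (P ^ n * B) * P ^ m := by simp only [mul_assoc]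
      _ ≤ B * (B * P ^ n) * P ^ m :=
        mul_le_mul_left (mul_le_mul_right (pow_mul_le_mul_pow hcomm n) B) _
      _ = B * B * (P ^ n * P ^ m) := by simp only [mul_assoc]
      _ ≤ B * P ^ (n + m) := by
        rw [pow_add]; exact mul_le_mul_left (toSubmodule_mul_self_le _) _
    exact this (mul_mem_mul hn hm)

end Filtration

theorem isNoetherianRing_adjoin_singleton (R : Type*) {A : Type*} [CommRing R]
    [IsNoetherianRing R] [Ring A] [Algebra R A] (u : A) :
    IsNoetherianRing (adjoin R {u}) := by
  rw [adjoin_singleton_eq_range_aeval]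
  exact isNoetherianRing_of_surjective _ _ (aeval u).rangeRestrict.toRingHom
    (aeval u).rangeRestrict_surjective

section Opposite

variable {R A : Type*} [CommSemiring R] [Semiring A] [Algebra R A]

theorem image_op_span (X : Set A) :
    op '' (span R X : Set A) = span R (op '' X) := by
  simpa using
    congrArg SetLike.coe (map_span ((opLinearEquiv R : A ≃ₗ[R] Aᵐᵒᵖ) : A →ₗ[R] Aᵐᵒᵖ) X)

theorem op_adjoin_singleton (u : A) : (adjoin R {u}).op = adjoin R {op u} := by
  rw [Subalgebra.op_adjoin]
  congr 1
  ext x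
  induction x using MulOpposite.rec'
  simp [eq_comm]

theorem map_op_toSubmodule (B : Subalgebra R A) :
    (toSubmodule B).map ((opLinearEquiv R : A ≃ₗ[R] Aᵐᵒᵖ) : A →ₗ[R] Aᵐᵒᵖ) =
      toSubmodule B.op := by
  ext x
  rw [mem_map_equiv]
  rfl

end Opposite

section HarishChandra

variable {A : Type} [Ring A] [Algebra ℂ A]

open scoped Pointwise in
theorem leftSpan_eq_span (Γ : Subalgebra ℂ A) (t : Set A) :
    leftSpan Γ t = Submodule.span Γ t := by
  have hset : {y | ∃ g ∈ Γ, ∃ x ∈ t, y = g * x} = (Set.univ : Set Γ) • t := by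
    ext y
    simp only [Set.mem_ofPred_eq, Set.mem_smul, Set.mem_univ, true_and, Subtype.exists,
      Subalgebra.smul_def, smul_eq_mul, exists_prop, eq_comm (a := y)]
  rw [leftSpan, hset, span_smul_of_span_eq_top span_univ, Submodule.coe_restrictScalars]

theorem biSpan_eq_leftSpan (Γ : Subalgebra ℂ A) (a : A) :
    biSpan Γ a = leftSpan Γ {y | ∃ g ∈ Γ, y = a * g} := by
  rw [biSpan, leftSpan]
  congr 3
  ext y
  simp only [Set.mem_ofPred_eq]
  constructor
  · rintro ⟨g₁, hg₁, g₂, hg₂, rfl⟩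
    exact ⟨g₁, hg₁, a * g₂, ⟨g₂, hg₂, rfl⟩, mul_assoc ..⟩
  · rintro ⟨g₁, hg₁, _, ⟨g₂, hg₂, rfl⟩, rfl⟩
    exact ⟨g₁, hg₁, g₂, hg₂, (mul_assoc ..).symm⟩

theorem exists_finset_biSpan_eq_leftSpan_of_fg {Γ : Subalgebra ℂ A} [IsNoetherianRing Γ]
    {a : A} {N : Submodule Γ A} (hN : N.FG) (ha : ∀ g ∈ Γ, a * g ∈ N) :
    ∃ S : Finset A, ↑S ⊆ biSpan Γ a ∧ biSpan Γ a = leftSpan Γ ↑S := by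
  have hle : Submodule.span Γ {y | ∃ g ∈ Γ, y = a * g} ≤ N :=
    span_le.2 fun _ ⟨g, hg, hy⟩ => hy ▸ ha g hg
  obtain ⟨S, hS⟩ := hN.of_le hle
  refine ⟨S, ?_, ?_⟩ <;> rw [biSpan_eq_leftSpan, leftSpan_eq_span, ← hS]
  · exact subset_span
  · rw [leftSpan_eq_span]

theorem exists_finset_biSpan_eq_leftSpan {u : A} {P : Submodule ℂ A} (hP : P.FG) (h1 : 1 ∈ P)
    (hgen : adjoin ℂ ({u} ∪ ↑P) = ⊤)
    (hcomm : P * span ℂ {u} ≤ toSubmodule (adjoin ℂ {u}) * P) (a : A) :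
    ∃ S : Finset A, ↑S ⊆ biSpan (adjoin ℂ {u}) a ∧
      biSpan (adjoin ℂ {u}) a = leftSpan (adjoin ℂ {u}) ↑S := by
  set Γ := adjoin ℂ {u}
  have := isNoetherianRing_adjoin_singleton ℂ u
  have hcomm' := mul_toSubmodule_adjoin_le hcomm
  obtain ⟨n, ha⟩ :=
    exists_mem_toSubmodule_adjoin_mul_pow hcomm' h1 (hgen ▸ Algebra.mem_top (x := a))
  obtain ⟨T, hT⟩ := hP.pow n
  refine exists_finset_biSpan_eq_leftSpan_of_fg (N := span Γ ↑T) (fg_span T.finite_toSet)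
    fun g hg => ?_
  have hle : toSubmodule Γ * P ^ n * toSubmodule Γ ≤ toSubmodule Γ * P ^ n := calc
    _ ≤ toSubmodule Γ * (toSubmodule Γ * P ^ n) := by
      rw [mul_assoc]; exact mul_le_mul_right (pow_mul_le_mul_pow hcomm' n) _
    _ ≤ toSubmodule Γ * P ^ n := by
      rw [← mul_assoc]; exact mul_le_mul_left (toSubmodule_mul_self_le Γ) _
  have hspan : toSubmodule Γ * P ^ n ≤ (span Γ (T : Set A)).restrictScalars ℂ := by
    refine mul_le.2 fun g hg x hx => ?_
    rw [← hT] at hx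
    exact Submodule.smul_mem _ (⟨g, hg⟩ : Γ) (span_le_restrictScalars ℂ Γ _ hx)
  exact hspan (hle (mul_mem_mul ha hg))

theorem image_op_biSpan (Γ : Subalgebra ℂ A) (a : A) :
    op '' biSpan Γ a = biSpan Γ.op (op a) := by
  rw [biSpan, biSpan, image_op_span]
  congr 2
  ext y
  induction y using MulOpposite.rec'
  simp only [Set.mem_image, Set.mem_ofPred_eq, mem_op, MulOpposite.exists, unop_op, op_inj,
    ← op_mul, mul_assoc, exists_eq_right]
  constructor <;> rintro ⟨g₁, hg₁, g₂, hg₂, rfl⟩ <;> exact ⟨g₂, hg₂, g₁, hg₁, rfl⟩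

theorem image_op_rightSpan (Γ : Subalgebra ℂ A) (s : Set A) :
    op '' rightSpan Γ s = leftSpan Γ.op (op '' s) := by
  rw [rightSpan, leftSpan, image_op_span]
  congr 2
  ext y
  induction y using MulOpposite.rec'
  simp only [Set.mem_image, Set.mem_ofPred_eq, mem_op, MulOpposite.exists, unop_op, op_inj,
    ← op_mul, exists_eq_right]

theorem exists_finset_biSpan_eq_rightSpan {u : A} {P : Submodule ℂ A} (hP : P.FG)
    (h1 : 1 ∈ P) (hgen : adjoin ℂ ({u} ∪ ↑P) = ⊤)
    (hcomm : span ℂ {u} * P ≤ P * toSubmodule (adjoin ℂ {u})) (a : A) :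
    ∃ S : Finset A, ↑S ⊆ biSpan (adjoin ℂ {u}) a ∧
      biSpan (adjoin ℂ {u}) a = rightSpan (adjoin ℂ {u}) ↑S := by
  classical
  let e : A →ₗ[ℂ] Aᵐᵒᵖ := (opLinearEquiv ℂ : A ≃ₗ[ℂ] Aᵐᵒᵖ)
  have hgen' : adjoin ℂ ({op u} ∪ ↑(P.map e)) = ⊤ := by
    have := congrArg Subalgebra.op hgen
    rw [Subalgebra.op_adjoin, op_top] at this
    convert this using 2
    ext x
    induction x using MulOpposite.rec'
    simp [e]
  have hcomm' : P.map e * span ℂ {op u} ≤ toSubmodule (adjoin ℂ {op u}) * P.map e := by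
    have := map_mono (f := e) hcomm
    rwa [map_op_mul, map_op_mul, map_span, Set.image_singleton, map_op_toSubmodule,
      op_adjoin_singleton] at this
  obtain ⟨S, hSsub, hSeq⟩ :=
    exists_finset_biSpan_eq_leftSpan (hP.map e) ⟨1, h1, rfl⟩ hgen' hcomm' (op a)
  rw [← op_adjoin_singleton, ← image_op_biSpan] at hSsub hSeq
  have hS : (S : Set Aᵐᵒᵖ) = op '' ↑(S.image unop) := by
    rw [Finset.coe_image, Set.image_image]; simp
  refine ⟨S.image unop, ?_, ?_⟩
  · rwa [hS, Set.image_subset_image_iff op_injective] at hSsub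
  · rwa [hS, ← image_op_rightSpan, Set.image_eq_image op_injective] at hSeq

end HarishChandra

section Commutators

variable {R A : Type*} [CommRing R] [Ring A] [Algebra R A] {u v w : A} (ρ : R)

theorem span_mul_span_singleton_le_of_commutators (huv : u * v - v * u = 2 * w + v)
    (huw : u * w - w * u = 2 * v * u + w + algebraMap R A ρ) :
    span R {1, v, w} * span R {u} ≤ toSubmodule (adjoin R {u}) * span R {1, v, w} := by
  set P := span R ({1, v, w} : Set A)
  set B := toSubmodule (adjoin R {u})
  have h1 : (1 : A) ∈ P := subset_span (by simp)
  have hv : v ∈ P := subset_span (by simp)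
  have hw : w ∈ P := subset_span (by simp)
  have hρ : algebraMap R A ρ ∈ P := (Algebra.algebraMap_eq_smul_one (A := A) ρ) ▸ P.smul_mem ρ h1
  have hPB : ∀ x ∈ P, x ∈ B * P := le_toSubmodule_mul _ P
  have huP : ∀ x ∈ P, u * x ∈ B * P := fun x hx => mul_mem_mul (self_mem_adjoin_singleton R u) hx
  have hvu : v * u ∈ B * P := by
    rw [show v * u = u * v - (w + w + v) by rw [← two_mul, ← huv]; abel]
    exact sub_mem (huP v hv) (add_mem (add_mem (hPB w hw) (hPB w hw)) (hPB v hv))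
  rw [span_mul_span, span_le, Set.mul_singleton, Set.image_subset_iff]
  simp only [Set.insert_subset_iff, Set.singleton_subset_iff, Set.mem_preimage, SetLike.mem_coe]
  refine ⟨by simpa only [one_mul, mul_one] using huP 1 h1, hvu, ?_⟩
  rw [show w * u = u * w - (v * u + v * u + w + algebraMap R A ρ) by
    rw [← two_mul, ← mul_assoc, ← huw]; abel]
  exact sub_mem (huP w hw) (add_mem (add_mem (add_mem hvu hvu) (hPB w hw)) (hPB _ hρ))

theorem span_singleton_mul_span_le_of_commutators (huv : u * v - v * u = 2 * w + v)
    (huw : u * w - w * u = 2 * v * u + w + algebraMap R A ρ) :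
    span R {u} * span R {1, v, w} ≤ span R {1, v, w} * toSubmodule (adjoin R {u}) := by
  set P := span R ({1, v, w} : Set A)
  set B := toSubmodule (adjoin R {u})
  have h1 : (1 : A) ∈ P := subset_span (by simp)
  have hv : v ∈ P := subset_span (by simp)
  have hw : w ∈ P := subset_span (by simp)
  have hρ : algebraMap R A ρ ∈ P := (Algebra.algebraMap_eq_smul_one (A := A) ρ) ▸ P.smul_mem ρ h1
  have hPB : ∀ x ∈ P, x ∈ P * B := le_mul_toSubmodule _ P
  have hPu : ∀ x ∈ P, x * u ∈ P * B := fun x hx => mul_mem_mul hx (self_mem_adjoin_singleton R u)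
  rw [span_mul_span, span_le, Set.singleton_mul, Set.image_subset_iff]
  simp only [Set.insert_subset_iff, Set.singleton_subset_iff, Set.mem_preimage, SetLike.mem_coe]
  refine ⟨by simpa only [one_mul, mul_one] using hPu 1 h1, ?_, ?_⟩
  · rw [sub_eq_iff_eq_add.1 huv, two_mul]
    exact add_mem (add_mem (add_mem (hPB w hw) (hPB w hw)) (hPB v hv)) (hPu v hv)
  · rw [sub_eq_iff_eq_add.1 huw, two_mul, add_mul]
    exact add_mem (add_mem (add_mem (add_mem (hPu v hv) (hPu v hv)) (hPB w hw)) (hPB _ hρ))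
      (hPu w hw)

end Commutators

theorem isHarishChandraSubalgebra_adjoin_of_commutators {A : Type} [Ring A] [Algebra ℂ A]
    {u v w : A} (ρ : ℂ) (hgen : adjoin ℂ {u, v, w} = ⊤) (huv : u * v - v * u = 2 * w + v)
    (huw : u * w - w * u = 2 * v * u + w + algebraMap ℂ A ρ) :
    IsHarishChandraSubalgebra (adjoin ℂ {u}) := by
  set P := span ℂ ({1, v, w} : Set A)
  have hP : P.FG := fg_span (Set.toFinite _)
  have h1 : (1 : A) ∈ P := subset_span (by simp)
  have hsub : ({u, v, w} : Set A) ⊆ {u} ∪ ↑P := by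
    rintro x (rfl | rfl | rfl)
    exacts [Or.inl rfl, Or.inr (subset_span (by simp)), Or.inr (subset_span (by simp))]
  have hgen' : adjoin ℂ ({u} ∪ ↑P) = ⊤ := top_unique (hgen ▸ adjoin_mono hsub)
  exact fun a =>
    ⟨exists_finset_biSpan_eq_leftSpan hP h1 hgen'
        (span_mul_span_singleton_le_of_commutators ρ huv huw) a,
      exists_finset_biSpan_eq_rightSpan hP h1 hgen'
        (span_singleton_mul_span_le_of_commutators ρ huv huw) a⟩

theorem Dq.adjoin_generators_eq_top (q p₀ p₁ : ℂ[X]) :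
    adjoin ℂ {uD q p₀ p₁, vD q p₀ p₁, wD q p₀ p₁} = ⊤ := by
  have hrange : Set.range (FreeAlgebra.ι ℂ) = ({U, V, W} : Set (FreeAlgebra ℂ (Fin 3))) := by
    ext x
    simp [U, V, W, Fin.exists_fin_succ, eq_comm]
  calc adjoin ℂ {uD q p₀ p₁, vD q p₀ p₁, wD q p₀ p₁}
      = (adjoin ℂ (Set.range (FreeAlgebra.ι ℂ))).map (RingQuot.mkAlgHom ℂ (DqRel q p₀ p₁)) := by
        rw [hrange, AlgHom.map_adjoin]; simp [Set.image_insert_eq, uD, vD, wD]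
    _ = ⊤ := by
        rw [FreeAlgebra.adjoin_range_ι, Algebra.map_top, AlgHom.range_eq_top]
        exact RingQuot.mkAlgHom_surjective ℂ _

theorem Dq.uD_mul_vD_sub_vD_mul_uD (q p₀ p₁ : ℂ[X]) :
    uD q p₀ p₁ * vD q p₀ p₁ - vD q p₀ p₁ * uD q p₀ p₁ = 2 * wD q p₀ p₁ + vD q p₀ p₁ := by
  simpa only [uD, vD, wD, map_sub, map_mul, map_add, map_ofNat] using
    RingQuot.mkAlgHom_rel ℂ (DqRel.rel1 (q := q) (p₀ := p₀) (p₁ := p₁))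

theorem Dq.uD_mul_wD_sub_wD_mul_uD (q p₀ p₁ : ℂ[X]) :
    uD q p₀ p₁ * wD q p₀ p₁ - wD q p₀ p₁ * uD q p₀ p₁ =
      2 * vD q p₀ p₁ * uD q p₀ p₁ + wD q p₀ p₁ + algebraMap ℂ (Dq q p₀ p₁) (rho q) := by
  simpa only [uD, vD, wD, map_sub, map_mul, map_add, map_ofNat, AlgHom.commutes] using
    RingQuot.mkAlgHom_rel ℂ (DqRel.rel2 (q := q) (p₀ := p₀) (p₁ := p₁))

end KleinD

open KleinD in
theorem statement12_general (q p₀ p₁ : Polynomial ℂ) :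
    IsHarishChandraSubalgebra (Algebra.adjoin ℂ {uD q p₀ p₁}) :=
  isHarishChandraSubalgebra_adjoin_of_commutators (rho q) (Dq.adjoin_generators_eq_top q p₀ p₁)
    (Dq.uD_mul_vD_sub_vD_mul_uD q p₀ p₁) (Dq.uD_mul_wD_sub_wD_mul_uD q p₀ p₁)

open KleinD in
/-- `ℂ[u]` is a Harish-Chandra subalgebra of `D(q)`: for every
`a ∈ D(q)`, the bimodule `ℂ[u]·a·ℂ[u]` is finitely generated as a left and as a right
`ℂ[u]`-module. -/
theorem statement12 (q p₀ p₁ : Polynomial ℂ) (hq : 4 ≤ q.natDegree)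
    (hp : pCond q p₀ p₁) :
    IsHarishChandraSubalgebra (Algebra.adjoin ℂ {uD q p₀ p₁}) :=
  statement12_general q p₀ p₁
end
end

section
/- (a) The unique left L#W-module homomorphism ε: 𝓛#W → L#W with ε(a·μw) = a·w for all a ∈ L, μ ∈ M, w ∈ W satisfies ε(X·ε(Y)) = ε(X·Y) for all X, Y ∈ 𝓛#W. (b) The map sending X ∈ 𝓛#W to the additive endomorphism a ↦ ε(X·a) of L#W is a ring homomorphism from 𝓛#W to the endomorphism ring of the additive group of L#W. -/
noncomputable section

namespace EpsLemma

variable (L : Type) [Field L]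

/-- Left multiplication by `a ∈ L`, as an additive endomorphism of `L`. -/
def mulE (a : L) : AddMonoid.End L := AddMonoidHom.mulLeft a

/-- A ring automorphism of `L`, as an additive endomorphism of `L`. -/
def ofAut (g : RingAut L) : AddMonoid.End L := g.toAddEquiv.toAddMonoidHom

/-- The skew monoid ring `𝓛#W = L#(M·W)`, realized (via its faithful action on `L`,
which identifies it with the set of finite sums `Σ aᵢ·(μᵢwᵢ)` by Dedekind's independence
of automorphisms) as the subring of additive endomorphisms of `L` generated by all left
multiplications together with the automorphisms `μ∘w`, `μ ∈ M`, `w ∈ W`. -/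
def bigL (M : Submonoid (RingAut L)) (W : Subgroup (RingAut L)) :
    Subring (AddMonoid.End L) :=
  Subring.closure (Set.range (mulE L) ∪ {Y | ∃ μ ∈ M, ∃ w ∈ W, Y = ofAut L (μ * w)})

/-- The skew group ring `L#W ⊆ 𝓛#W`: the `L`-span of `{1·w | w ∈ W}`. -/
def smallL (W : Subgroup (RingAut L)) : Subring (AddMonoid.End L) :=
  Subring.closure (Set.range (mulE L) ∪ {Y | ∃ w ∈ W, Y = ofAut L w})

/-- The defining properties of `ε : 𝓛#W → L#W`: it takes values in `L#W`, is additive,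
is a homomorphism of left `L#W`-modules, and sends `a·μw` to `a·w`. -/
def IsEps (M : Submonoid (RingAut L)) (W : Subgroup (RingAut L))
    (ε : AddMonoid.End L → AddMonoid.End L) : Prop :=
  (∀ x ∈ bigL L M W, ε x ∈ smallL L W)
  ∧ (∀ x ∈ bigL L M W, ∀ y ∈ bigL L M W, ε (x + y) = ε x + ε y)
  ∧ (∀ z ∈ smallL L W, ∀ x ∈ bigL L M W, ε (z * x) = z * ε x)
  ∧ (∀ (a : L), ∀ μ ∈ M, ∀ w ∈ W, ε (mulE L a * ofAut L (μ * w)) = mulE L a * ofAut L w)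

end EpsLemma

/-!
By Dedekind's independence of characters the endomorphisms `μ ∘ w` of `L` are `L`-linearly
independent, so there is an `L`-linear `ε : End L → End L` with `ε (μ ∘ w) = w`. Because
`w μ w⁻¹ ∈ M`, the products `μ ∘ w` form a monoid, hence `𝓛#W` (and likewise `L#W`) is just the
`L`-span of its automorphisms. Every identity to be proved is additive in each argument, so it
reduces to monomials, where it is the computation
`(a • μw) * (b • μ'w') = (a * μw(b)) • (μ · wμ'w⁻¹)(ww')`, sent by `ε` to `(a * μw(b)) • ww'`.
-/

theorem LinearIndependent.exists_linearMap_apply_eq {K V V' ι : Type*} [Field K]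
    [AddCommGroup V] [Module K V] [AddCommGroup V'] [Module K V'] {v : ι → V}
    (hv : LinearIndependent K v) (f : ι → V') : ∃ g : V →ₗ[K] V', ∀ i, g (v i) = f i := by
  obtain ⟨g, hg⟩ := LinearMap.exists_extend ((Module.Basis.span hv).constr K f)
  refine ⟨g, fun i => ?_⟩
  have := congr($hg (Module.Basis.span hv i))
  rwa [Module.Basis.constr_basis, LinearMap.comp_apply, Module.Basis.span_apply] at this

namespace EpsLemma

variable {L : Type} [Field L]

section SkewSpan

lemma mulE_mul (a : L) (f : AddMonoid.End L) : mulE L a * f = a • f := rfl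

instance : IsScalarTower L (AddMonoid.End L) (AddMonoid.End L) := ⟨fun _ _ _ => rfl⟩

lemma ofAut_mul (g h : RingAut L) : ofAut L (g * h) = ofAut L g * ofAut L h := rfl

lemma ofAut_mul_smul (g : RingAut L) (a : L) (f : AddMonoid.End L) :
    ofAut L g * (a • f) = g a • (ofAut L g * f) :=
  AddMonoidHom.ext fun x => map_mul g a (f x)

lemma smul_ofAut_mul_smul_ofAut (a b : L) (g h : RingAut L) :
    a • ofAut L g * (b • ofAut L h) = (a * g b) • ofAut L (g * h) := by
  rw [smul_mul_assoc, ofAut_mul_smul, smul_smul, ofAut_mul]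

theorem linearIndependent_ofAut {ι : Type*} {g : ι → RingAut L} (hg : Function.Injective g) :
    LinearIndependent L (fun i => ofAut L (g i)) := by
  have hg' : Function.Injective fun i => ((g i : RingAut L) : L →* L) :=
    fun i j h => hg (RingEquiv.ext fun x => DFunLike.congr_fun h x)
  let coeFn : AddMonoid.End L →ₗ[L] L → L :=
    { toFun := (⇑), map_add' := fun _ _ => rfl, map_smul' := fun _ _ => rfl }
  exact .of_comp coeFn ((linearIndependent_monoidHom L L).comp _ hg')

variable (S : Submonoid (RingAut L))

theorem mul_mem_span_ofAut {x y : AddMonoid.End L} (hx : x ∈ Submodule.span L (ofAut L '' S))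
    (hy : y ∈ Submodule.span L (ofAut L '' S)) : x * y ∈ Submodule.span L (ofAut L '' S) := by
  induction hx using Submodule.span_induction with
  | mem x hx =>
    obtain ⟨g, hg, rfl⟩ := hx
    induction hy using Submodule.span_induction with
    | mem y hy =>
      obtain ⟨h, hh, rfl⟩ := hy
      exact Submodule.subset_span ⟨g * h, S.mul_mem hg hh, rfl⟩
    | zero => simp
    | add y z _ _ hy hz => rw [mul_add]; exact add_mem hy hz
    | smul a y _ hy => rw [ofAut_mul_smul]; exact Submodule.smul_mem _ _ hy
  | zero => simp
  | add x y _ _ hx hy => rw [add_mul]; exact add_mem hx hy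
  | smul a x _ hx => rw [smul_mul_assoc]; exact Submodule.smul_mem _ _ hx

def skewSpan : Subring (AddMonoid.End L) :=
  { Submodule.span L (ofAut L '' S) with
    one_mem' := Submodule.subset_span ⟨1, S.one_mem, rfl⟩
    neg_mem' := Submodule.neg_mem _
    mul_mem' := mul_mem_span_ofAut S }

theorem mem_skewSpan {x : AddMonoid.End L} :
    x ∈ skewSpan S ↔ x ∈ Submodule.span L (ofAut L '' S) := Iff.rfl

theorem closure_eq_skewSpan :
    Subring.closure (Set.range (mulE L) ∪ ofAut L '' S) = skewSpan S := by
  refine le_antisymm (Subring.closure_le.mpr ?_) fun x hx => ?_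
  · rintro _ (⟨a, rfl⟩ | hg)
    · rw [← mul_one (mulE L a), mulE_mul]
      exact Submodule.smul_mem (Submodule.span L _) a (skewSpan S).one_mem
    · exact Submodule.subset_span hg
  · rw [mem_skewSpan] at hx
    induction hx using Submodule.span_induction with
    | mem x hx => exact Subring.subset_closure (Or.inr hx)
    | zero => exact zero_mem _
    | add x y _ _ hx hy => exact add_mem hx hy
    | smul a x _ hx =>
      rw [← mulE_mul]
      exact mul_mem (Subring.subset_closure (Or.inl ⟨a, rfl⟩)) hx

@[elab_as_elim]
theorem skewSpan_induction {P : AddMonoid.End L → Prop}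
    (smul_ofAut : ∀ (a : L), ∀ g ∈ S, P (a • ofAut L g))
    (add : ∀ x ∈ skewSpan S, ∀ y ∈ skewSpan S, P x → P y → P (x + y))
    {x : AddMonoid.End L} (hx : x ∈ skewSpan S) : P x := by
  rw [mem_skewSpan] at hx
  induction hx using Submodule.closure_induction with
  | zero => simpa using smul_ofAut 0 1 S.one_mem
  | add x y hx hy hPx hPy => exact add x hx y hy hPx hPy
  | smul_mem a x hx => obtain ⟨g, hg, rfl⟩ := hx; exact smul_ofAut a g hg

end SkewSpan

section Eps

variable {M : Submonoid (RingAut L)} {W : Subgroup (RingAut L)}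

def mulSubmonoid (hconj : ∀ w ∈ W, ∀ μ ∈ M, w * μ * w⁻¹ ∈ M) : Submonoid (RingAut L) where
  carrier := {g | ∃ μ ∈ M, ∃ w ∈ W, g = μ * w}
  one_mem' := ⟨1, M.one_mem, 1, W.one_mem, (one_mul 1).symm⟩
  mul_mem' := by
    rintro _ _ ⟨μ, hμ, w, hw, rfl⟩ ⟨μ', hμ', w', hw', rfl⟩
    exact ⟨μ * (w * μ' * w⁻¹), M.mul_mem hμ (hconj w hw μ' hμ'), w * w', W.mul_mem hw hw',
      by group⟩

theorem bigL_eq_skewSpan (hconj : ∀ w ∈ W, ∀ μ ∈ M, w * μ * w⁻¹ ∈ M) :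
    bigL L M W = skewSpan (mulSubmonoid hconj) := by
  rw [← closure_eq_skewSpan]
  refine congrArg (fun T => Subring.closure (Set.range (mulE L) ∪ T)) (Set.ext fun Y => ?_)
  constructor
  · rintro ⟨μ, hμ, w, hw, rfl⟩
    exact ⟨μ * w, ⟨μ, hμ, w, hw, rfl⟩, rfl⟩
  · rintro ⟨_, ⟨μ, hμ, w, hw, rfl⟩, rfl⟩
    exact ⟨μ, hμ, w, hw, rfl⟩

theorem smallL_eq_skewSpan : smallL L W = skewSpan W.toSubmonoid := by
  rw [← closure_eq_skewSpan]
  refine congrArg (fun T => Subring.closure (Set.range (mulE L) ∪ T)) (Set.ext fun Y => ?_)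
  constructor <;> exact fun ⟨w, hw, h⟩ => ⟨w, hw, h.symm⟩

@[elab_as_elim]
theorem bigL_induction (hconj : ∀ w ∈ W, ∀ μ ∈ M, w * μ * w⁻¹ ∈ M)
    {P : AddMonoid.End L → Prop}
    (smul_ofAut : ∀ (a : L), ∀ μ ∈ M, ∀ w ∈ W, P (a • ofAut L (μ * w)))
    (add : ∀ x ∈ bigL L M W, ∀ y ∈ bigL L M W, P x → P y → P (x + y))
    {x : AddMonoid.End L} (hx : x ∈ bigL L M W) : P x := by
  rw [bigL_eq_skewSpan hconj] at hx add
  refine skewSpan_induction _ ?_ add hx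
  rintro a _ ⟨μ, hμ, w, hw, rfl⟩
  exact smul_ofAut a μ hμ w hw

@[elab_as_elim]
theorem smallL_induction {P : AddMonoid.End L → Prop}
    (smul_ofAut : ∀ (a : L), ∀ w ∈ W, P (a • ofAut L w))
    (add : ∀ x ∈ smallL L W, ∀ y ∈ smallL L W, P x → P y → P (x + y))
    {x : AddMonoid.End L} (hx : x ∈ smallL L W) : P x := by
  rw [smallL_eq_skewSpan] at hx add
  exact skewSpan_induction _ smul_ofAut add hx

theorem smallL_le_bigL : smallL L W ≤ bigL L M W := by
  refine Subring.closure_mono (Set.union_subset_union_right _ ?_)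
  rintro _ ⟨w, hw, rfl⟩
  exact ⟨1, M.one_mem, w, hw, by rw [one_mul]⟩

theorem smul_ofAut_mem_smallL (a : L) {w : RingAut L} (hw : w ∈ W) :
    a • ofAut L w ∈ smallL L W := by
  rw [← mulE_mul]
  exact mul_mem (Subring.subset_closure (Or.inl ⟨a, rfl⟩))
    (Subring.subset_closure (Or.inr ⟨w, hw, rfl⟩))

theorem exists_eps (hinj : ∀ μ₁ ∈ M, ∀ μ₂ ∈ M, ∀ w₁ ∈ W, ∀ w₂ ∈ W,
      μ₁ * w₁ = μ₂ * w₂ → μ₁ = μ₂ ∧ w₁ = w₂) :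
    ∃ ε : AddMonoid.End L →ₗ[L] AddMonoid.End L,
      ∀ μ ∈ M, ∀ w ∈ W, ε (ofAut L (μ * w)) = ofAut L w := by
  have hmul : Function.Injective fun p : M × W => (p.1 * p.2 : RingAut L) := fun p q h =>
    let ⟨h₁, h₂⟩ := hinj _ p.1.2 _ q.1.2 _ p.2.2 _ q.2.2 h
    Prod.ext (Subtype.ext h₁) (Subtype.ext h₂)
  obtain ⟨ε, hε⟩ := (linearIndependent_ofAut hmul).exists_linearMap_apply_eq
    fun p => ofAut L p.2
  exact ⟨ε, fun μ hμ w hw => hε (⟨μ, hμ⟩, ⟨w, hw⟩)⟩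

variable {ε : AddMonoid.End L →ₗ[L] AddMonoid.End L}

theorem eps_smul_ofAut_mul (hε : ∀ μ ∈ M, ∀ w ∈ W, ε (ofAut L (μ * w)) = ofAut L w) (a : L)
    {μ w : RingAut L} (hμ : μ ∈ M) (hw : w ∈ W) : ε (a • ofAut L (μ * w)) = a • ofAut L w := by
  rw [map_smul, hε μ hμ w hw]

theorem eps_smul_ofAut (hε : ∀ μ ∈ M, ∀ w ∈ W, ε (ofAut L (μ * w)) = ofAut L w)
    (a : L) {w : RingAut L} (hw : w ∈ W) : ε (a • ofAut L w) = a • ofAut L w := by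
  simpa using eps_smul_ofAut_mul hε a M.one_mem hw

theorem eps_smul_ofAut_mul_mul_smul_ofAut_mul (hconj : ∀ w ∈ W, ∀ μ ∈ M, w * μ * w⁻¹ ∈ M)
    (hε : ∀ μ ∈ M, ∀ w ∈ W, ε (ofAut L (μ * w)) = ofAut L w) (a b : L)
    {μ w μ' w' : RingAut L} (hμ : μ ∈ M) (hw : w ∈ W) (hμ' : μ' ∈ M) (hw' : w' ∈ W) :
    ε (a • ofAut L (μ * w) * (b • ofAut L (μ' * w'))) = (a * (μ * w) b) • ofAut L (w * w') := by
  have hmul : μ * w * (μ' * w') = μ * (w * μ' * w⁻¹) * (w * w') := by group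
  rw [smul_ofAut_mul_smul_ofAut, hmul,
    eps_smul_ofAut_mul hε _ (M.mul_mem hμ (hconj w hw μ' hμ')) (W.mul_mem hw hw')]

theorem eps_mem_smallL (hconj : ∀ w ∈ W, ∀ μ ∈ M, w * μ * w⁻¹ ∈ M)
    (hε : ∀ μ ∈ M, ∀ w ∈ W, ε (ofAut L (μ * w)) = ofAut L w) {x : AddMonoid.End L}
    (hx : x ∈ bigL L M W) : ε x ∈ smallL L W := by
  refine bigL_induction hconj (fun a μ hμ w hw => ?_) (fun x _ y _ hx hy => ?_) hx
  · rw [eps_smul_ofAut_mul hε a hμ hw]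
    exact smul_ofAut_mem_smallL a hw
  · rw [map_add]
    exact add_mem hx hy

theorem eps_eq_self_of_mem_smallL (hε : ∀ μ ∈ M, ∀ w ∈ W, ε (ofAut L (μ * w)) = ofAut L w)
    {z : AddMonoid.End L} (hz : z ∈ smallL L W) : ε z = z := by
  refine smallL_induction (fun a w hw => ?_) (fun x _ y _ hx hy => ?_) hz
  · exact eps_smul_ofAut hε a hw
  · rw [map_add, hx, hy]

theorem eps_mul_of_mem_smallL (hconj : ∀ w ∈ W, ∀ μ ∈ M, w * μ * w⁻¹ ∈ M)
    (hε : ∀ μ ∈ M, ∀ w ∈ W, ε (ofAut L (μ * w)) = ofAut L w) {z x : AddMonoid.End L}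
    (hz : z ∈ smallL L W) (hx : x ∈ bigL L M W) : ε (z * x) = z * ε x := by
  refine smallL_induction (fun a w' hw' => ?_) (fun z₁ _ z₂ _ h₁ h₂ => ?_) hz
  · refine bigL_induction hconj (fun b μ hμ w hw => ?_) (fun x₁ _ x₂ _ h₁ h₂ => ?_) hx
    · have h := eps_smul_ofAut_mul_mul_smul_ofAut_mul hconj hε a b M.one_mem hw' hμ hw
      rw [one_mul] at h
      rw [h, eps_smul_ofAut_mul hε b hμ hw, smul_ofAut_mul_smul_ofAut]
    · rw [mul_add, map_add, h₁, h₂, map_add, mul_add]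
  · rw [add_mul, map_add, h₁, h₂, add_mul]

theorem eps_mul_eps (hconj : ∀ w ∈ W, ∀ μ ∈ M, w * μ * w⁻¹ ∈ M)
    (hε : ∀ μ ∈ M, ∀ w ∈ W, ε (ofAut L (μ * w)) = ofAut L w) {X Y : AddMonoid.End L}
    (hX : X ∈ bigL L M W) (hY : Y ∈ bigL L M W) : ε (X * ε Y) = ε (X * Y) := by
  refine bigL_induction hconj (fun b μ' hμ' w' hw' => ?_) (fun Y₁ _ Y₂ _ h₁ h₂ => ?_) hY
  · refine bigL_induction hconj (fun a μ hμ w hw => ?_) (fun X₁ _ X₂ _ h₁ h₂ => ?_) hX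
    · have h := eps_smul_ofAut_mul_mul_smul_ofAut_mul hconj hε a b hμ hw M.one_mem hw'
      rw [one_mul] at h
      rw [eps_smul_ofAut_mul hε b hμ' hw', h, eps_smul_ofAut_mul_mul_smul_ofAut_mul hconj hε a b hμ hw hμ' hw']
    · rw [add_mul, add_mul, map_add, map_add, h₁, h₂]
  · rw [map_add, mul_add, mul_add, map_add, map_add, h₁, h₂]

theorem IsEps.apply_eq_of_mem_bigL (hconj : ∀ w ∈ W, ∀ μ ∈ M, w * μ * w⁻¹ ∈ M)
    (hε : ∀ μ ∈ M, ∀ w ∈ W, ε (ofAut L (μ * w)) = ofAut L w)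
    {ε' : AddMonoid.End L → AddMonoid.End L} (hε' : IsEps L M W ε') {x : AddMonoid.End L}
    (hx : x ∈ bigL L M W) : ε' x = ε x := by
  refine bigL_induction hconj (fun a μ hμ w hw => ?_) (fun x hx y hy h₁ h₂ => ?_) hx
  · rw [eps_smul_ofAut_mul hε a hμ hw, ← mulE_mul, ← mulE_mul, hε'.2.2.2 a μ hμ w hw]
  · rw [hε'.2.1 x hx y hy, h₁, h₂, map_add]

end Eps

end EpsLemma

open EpsLemma in
theorem statement15_general (L : Type) [Field L]
    (M : Submonoid (RingAut L)) (W : Subgroup (RingAut L))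
    (hconj : ∀ w ∈ W, ∀ μ ∈ M, w * μ * w⁻¹ ∈ M)
    (hinj : ∀ μ₁ ∈ M, ∀ μ₂ ∈ M, ∀ w₁ ∈ W, ∀ w₂ ∈ W,
      μ₁ * w₁ = μ₂ * w₂ → μ₁ = μ₂ ∧ w₁ = w₂) :
    ∃ ε : AddMonoid.End L → AddMonoid.End L,
      IsEps L M W ε
      -- uniqueness of ε (on `𝓛#W`)
      ∧ (∀ ε' : AddMonoid.End L → AddMonoid.End L, IsEps L M W ε' →
          ∀ x ∈ bigL L M W, ε' x = ε x)
      -- (a): `ε(X·ε(Y)) = ε(X·Y)`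
      ∧ (∀ X ∈ bigL L M W, ∀ Y ∈ bigL L M W, ε (X * ε Y) = ε (X * Y))
      -- (b): `X ↦ (a ↦ ε(X·a))` is a ring homomorphism `𝓛#W → End(L#W, +)`:
      -- it is multiplicative, additive and unital.
      ∧ (∀ X ∈ bigL L M W, ∀ Y ∈ bigL L M W, ∀ a ∈ smallL L W,
          ε (X * ε (Y * a)) = ε (X * Y * a))
      ∧ (∀ X ∈ bigL L M W, ∀ Y ∈ bigL L M W, ∀ a ∈ smallL L W,
          ε ((X + Y) * a) = ε (X * a) + ε (Y * a))
      ∧ (∀ a ∈ smallL L W, ε (1 * a) = a) := by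
  obtain ⟨ε, hε⟩ := exists_eps hinj
  refine ⟨ε, ⟨fun x hx => eps_mem_smallL hconj hε hx, fun x _ y _ => map_add ε x y,
      fun z hz x hx => eps_mul_of_mem_smallL hconj hε hz hx, fun a μ hμ w hw => ?_⟩,
    fun ε' hε' x hx => hε'.apply_eq_of_mem_bigL hconj hε hx,
    fun X hX Y hY => eps_mul_eps hconj hε hX hY,
    fun X hX Y hY a ha => ?_, fun X _ Y _ a _ => by rw [add_mul, map_add],
    fun a ha => by rw [one_mul, eps_eq_self_of_mem_smallL hε ha]⟩
  · rw [mulE_mul, mulE_mul, eps_smul_ofAut_mul hε a hμ hw]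
  · rw [eps_mul_eps hconj hε hX (mul_mem hY (smallL_le_bigL ha)), mul_assoc]

open EpsLemma in
/-- Let `L` be a field, `M` a monoid of ring automorphisms of `L`, `W` a
finite group of ring automorphisms of `L`, with `wMw⁻¹ ⊆ M` for `w ∈ W` and such that
`(μ, w) ↦ μ∘w` is injective on `M × W`.  (a) There is a unique left `L#W`-module
homomorphism `ε : 𝓛#W → L#W` with `ε(a·μw) = a·w`, and it satisfies
`ε(X·ε(Y)) = ε(X·Y)`.  (b) The map `X ↦ (a ↦ ε(X·a))` is a ring homomorphism from `𝓛#W`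
to the endomorphism ring of the additive group of `L#W`. -/
theorem statement15 (L : Type) [Field L]
    (M : Submonoid (RingAut L)) (W : Subgroup (RingAut L)) [Finite ↥W]
    (hconj : ∀ w ∈ W, ∀ μ ∈ M, w * μ * w⁻¹ ∈ M)
    (hinj : ∀ μ₁ ∈ M, ∀ μ₂ ∈ M, ∀ w₁ ∈ W, ∀ w₂ ∈ W,
      μ₁ * w₁ = μ₂ * w₂ → μ₁ = μ₂ ∧ w₁ = w₂) :
    ∃ ε : AddMonoid.End L → AddMonoid.End L,
      IsEps L M W ε
      -- uniqueness of ε (on `𝓛#W`)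
      ∧ (∀ ε' : AddMonoid.End L → AddMonoid.End L, IsEps L M W ε' →
          ∀ x ∈ bigL L M W, ε' x = ε x)
      -- (a): `ε(X·ε(Y)) = ε(X·Y)`
      ∧ (∀ X ∈ bigL L M W, ∀ Y ∈ bigL L M W, ε (X * ε Y) = ε (X * Y))
      -- (b): `X ↦ (a ↦ ε(X·a))` is a ring homomorphism `𝓛#W → End(L#W, +)`:
      -- it is multiplicative, additive and unital.
      ∧ (∀ X ∈ bigL L M W, ∀ Y ∈ bigL L M W, ∀ a ∈ smallL L W,
          ε (X * ε (Y * a)) = ε (X * Y * a))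
      ∧ (∀ X ∈ bigL L M W, ∀ Y ∈ bigL L M W, ∀ a ∈ smallL L W,
          ε ((X + Y) * a) = ε (X * a) + ε (Y * a))
      ∧ (∀ a ∈ smallL L W, ε (1 * a) = a) :=
  statement15_general L M W hconj hinj
end
end
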